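/- arXiv:2205.05715 — 10 statements merged into one kernel-verified Lean document; each statement's English description precedes it below -/
import Mathlib

section
/- Soundness of rule (R1) (part of Theorem 1). Let G be a DAG on a finite vertex set, let X and Y be distinct vertices, let A be a set of non-descendants of {X, Y}, and let W ∈ A. If W and Y are d-connected given A \ {W} and W and Y are d-separated given (A \ {W}) ∪ {X}, then X is an ancestor of Y. -/
/-- `Ancestor E x y` : there is a nonempty directed path from `x` to `y` in the
directed graph with edge relation `E`; i.e. `x` is an ancestor of `y` and `y` a
descendant of `x`. -/
def Ancestor {α : Type*} (E : α → α → Prop) (x y : α) : Prop :=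
  Relation.TransGen E x y

/-- A directed graph is acyclic (a DAG) if it has no directed cycle. -/
def Acyclic {α : Type*} (E : α → α → Prop) : Prop :=
  ∀ v, ¬ Ancestor E v v

/-- `A` is a set of non-descendants of `{x, y}`. -/
def NonDescSet {α : Type*} (E : α → α → Prop) (x y : α) (A : Set α) : Prop :=
  x ∉ A ∧ y ∉ A ∧ ∀ a ∈ A, ¬ Ancestor E x a ∧ ¬ Ancestor E y a

/-- A walk of length `n` with vertex sequence `v 0, v 1, …, v n` and directions `d`:
`d i = true` means the edge `v i → v (i+1)` is in the graph (traversed forwards),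
`d i = false` means the edge `v (i+1) → v i` is in the graph (traversed backwards). -/
def IsWalk {α : Type*} (E : α → α → Prop) (n : ℕ) (v : ℕ → α) (d : ℕ → Bool) : Prop :=
  ∀ i < n, if d i = true then E (v i) (v (i+1)) else E (v (i+1)) (v i)

/-- The interior vertex at position `j` (for `0 < j < n`) is a collider on the walk:
both incident edges of the walk point into it. -/
def IsColliderAt (d : ℕ → Bool) (j : ℕ) : Prop :=
  d (j - 1) = true ∧ d j = false

/-- The activeness condition for a walk given conditioning set `C`: every collider is
in `C` or has a descendant in `C`, and no non-collider is in `C`. -/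
def ActiveCond {α : Type*} (E : α → α → Prop) (C : Set α) (n : ℕ) (v : ℕ → α)
    (d : ℕ → Bool) : Prop :=
  ∀ j, 0 < j → j < n →
    (IsColliderAt d j → v j ∈ C ∨ ∃ w ∈ C, Ancestor E (v j) w) ∧
    (¬ IsColliderAt d j → v j ∉ C)

/-- An active walk given `C`: a walk satisfying the activeness condition. -/
def ActiveWalk {α : Type*} (E : α → α → Prop) (C : Set α) (n : ℕ) (v : ℕ → α)
    (d : ℕ → Bool) : Prop :=
  IsWalk E n v d ∧ ActiveCond E C n v d

/-- `x` and `y` are d-connected given `C`: some walk between them is active given `C`. -/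
def DConnected {α : Type*} (E : α → α → Prop) (C : Set α) (x y : α) : Prop :=
  ∃ n v d, v 0 = x ∧ v n = y ∧ ActiveWalk E C n v d

/-- `x` and `y` are d-separated given `C`: no walk between them is active given `C`. -/
def DSeparated {α : Type*} (E : α → α → Prop) (C : Set α) (x y : α) : Prop :=
  ¬ DConnected E C x y

private lemma fwdAux {α : Type*} {E : α → α → Prop} {n : ℕ} {v : ℕ → α} {d : ℕ → Bool}
    {C : Set α} {X : α}
    (hwalk : IsWalk E n v d) (hact : ActiveCond E C n v d)
    (hnd : ∀ z, Ancestor E X z → z ∉ C) :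
    ∀ m j, n - j = m → j < n → d j = true → Relation.ReflTransGen E X (v j) →
      Ancestor E X (v n) := by
  intro m
  induction m with
  | zero => intro j h hj; omega
  | succ m ih =>
    intro j hm hj hd hX
    have hedge : E (v j) (v (j+1)) := by
      have := hwalk j hj; simpa [hd] using this
    have hX' : Ancestor E X (v (j+1)) := Relation.TransGen.tail' hX hedge
    by_cases hjn : j + 1 = n
    · rw [← hjn]; exact hX'
    · have hj1 : j + 1 < n := by omega
      cases hdj : d (j+1) with
      | true => exact ih (j+1) (by omega) hj1 hdj hX'.to_reflTransGen
      | false =>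
        exfalso
        have hcol : IsColliderAt d (j+1) := ⟨by simpa using hd, hdj⟩
        rcases (hact (j+1) (by omega) hj1).1 hcol with h1 | ⟨w, hwC, hw⟩
        · exact hnd _ hX' h1
        · exact hnd _ (hX'.trans hw) hwC

private lemma bwdAux {α : Type*} {E : α → α → Prop} {n : ℕ} {v : ℕ → α} {d : ℕ → Bool}
    {C : Set α} {X : α}
    (hwalk : IsWalk E n v d) (hact : ActiveCond E C n v d)
    (hnd : ∀ z, Ancestor E X z → z ∉ C)
    (hW0 : ¬ Ancestor E X (v 0)) :
    ∀ j, j < n → d j = false → Relation.ReflTransGen E X (v (j+1)) → False := by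
  intro j
  induction j with
  | zero =>
    intro hj hd hX
    have hedge : E (v 1) (v 0) := by
      have := hwalk 0 hj; simpa [hd] using this
    exact hW0 (Relation.TransGen.tail' hX hedge)
  | succ j ih =>
    intro hj hd hX
    have hedge : E (v (j+2)) (v (j+1)) := by
      have := hwalk (j+1) hj; simpa [hd] using this
    have hX' : Ancestor E X (v (j+1)) := Relation.TransGen.tail' hX hedge
    cases hdj : d j with
    | true =>
      have hcol : IsColliderAt d (j+1) := ⟨by simpa using hdj, hd⟩
      rcases (hact (j+1) (by omega) hj).1 hcol with h1 | ⟨w, hwC, hw⟩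
      · exact hnd _ hX' h1
      · exact hnd _ (hX'.trans hw) hwC
    | false => exact ih (by omega) hdj hX'.to_reflTransGen

/-- Soundness of rule (R1): if for some `W ∈ A` (a set of non-descendants of `{X, Y}`),
`W` and `Y` are d-connected given `A \ {W}` but d-separated given `(A \ {W}) ∪ {X}`,
then `X` is an ancestor of `Y`. -/
theorem rule_R1_sound {α : Type*} [Fintype α] (E : α → α → Prop) (hG : Acyclic E)
    (X Y : α) (hXY : X ≠ Y) (A : Set α) (hA : NonDescSet E X Y A) (W : α) (hW : W ∈ A)
    (hcon : DConnected E (A \ {W}) W Y)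
    (hsep : DSeparated E ((A \ {W}) ∪ {X}) W Y) :
    Ancestor E X Y := by
  obtain ⟨n, vv, dd, hv0, hvn, hwalk, hact⟩ := hcon
  obtain ⟨hXA, hYA, hndA⟩ := hA
  have hnd : ∀ z, Ancestor E X z → z ∉ (A \ {W}) := fun z hz hzC => (hndA z hzC.1).1 hz
  have hj : ∃ j, 0 < j ∧ j < n ∧ ¬ IsColliderAt dd j ∧ vv j = X := by
    by_contra h
    push_neg at h
    refine hsep ⟨n, vv, dd, hv0, hvn, hwalk, fun j hj0 hjn => ⟨fun hcol => ?_, fun hncol => ?_⟩⟩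
    · rcases (hact j hj0 hjn).1 hcol with h1 | ⟨w, hw1, hw2⟩
      · exact Or.inl (Or.inl h1)
      · exact Or.inr ⟨w, Or.inl hw1, hw2⟩
    · have h1 := (hact j hj0 hjn).2 hncol
      rintro (hmem | hmem)
      · exact h1 hmem
      · exact h j hj0 hjn hncol hmem
  obtain ⟨j, hj0, hjn, hncol, hvjX⟩ := hj
  have hW0 : ¬ Ancestor E X (vv 0) := by rw [hv0]; exact (hndA W hW).1
  have hYgoal : Ancestor E X (vv n) → Ancestor E X Y := by rw [hvn]; exact id
  cases hdj : dd j with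
  | true =>
    exact hYgoal (fwdAux hwalk hact hnd (n - j) j rfl hjn hdj
      (hvjX ▸ Relation.ReflTransGen.refl))
  | false =>
    cases hdj1 : dd (j - 1) with
    | true => exact absurd ⟨hdj1, hdj⟩ hncol
    | false =>
      exfalso
      have hj1 : j - 1 + 1 = j := by omega
      refine bwdAux hwalk hact hnd hW0 (j-1) (by omega) hdj1 ?_
      rw [hj1, hvjX]
end

section
/- Soundness of rule (R2) (part of Theorem 1). Let G be a DAG on a finite vertex set, let X and Y be distinct vertices, let A be a set of non-descendants of {X, Y}, and let W ∈ A. If W and X are d-separated given A \ {W} and W and X are d-connected given (A \ {W}) ∪ {Y}, then X is not a descendant of Y. -/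
/-!
Suppose `Y` is an ancestor of `X` and take a walk from `W` to `X` that is active given
`(A \ {W}) ∪ {Y}`. If every collider on it is already open given `A \ {W}`, the walk is active
given `A \ {W}`. Otherwise the first collider `u` that is not is an ancestor of `Y` (or `Y`
itself), so none of its descendants lies in `A \ {W}`. Cutting the walk at `u` and continuing
along a directed path `u → ⋯ → Y → ⋯ → X` then gives a walk from `W` to `X` that is active
given `A \ {W}`: `u` and the vertices after it are non-colliders outside `A \ {W}`.
-/

open Relation Set

section

variable {α : Type*} {E : α → α → Prop}

def ancestralClosure (E : α → α → Prop) (C : Set α) : Set α :=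
  {u | u ∈ C ∨ ∃ w ∈ C, Ancestor E u w}

theorem mem_ancestralClosure_iff {C : Set α} {u : α} :
    u ∈ ancestralClosure E C ↔ ∃ w ∈ C, ReflTransGen E u w := by
  simp only [ancestralClosure, mem_ofPred_eq, reflTransGen_iff_eq_or_transGen, Ancestor]
  constructor
  · rintro (hu | ⟨w, hw, huw⟩)
    exacts [⟨u, hu, .inl rfl⟩, ⟨w, hw, .inr huw⟩]
  · rintro ⟨w, hw, rfl | huw⟩
    exacts [.inl hw, .inr ⟨w, hw, huw⟩]

theorem ancestralClosure_union (C D : Set α) :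
    ancestralClosure E (C ∪ D) = ancestralClosure E C ∪ ancestralClosure E D := by
  ext u
  simp only [mem_union, mem_ancestralClosure_iff, or_and_right, exists_or]

theorem mem_ancestralClosure_singleton {u y : α} :
    u ∈ ancestralClosure E {y} ↔ ReflTransGen E u y := by
  simp [mem_ancestralClosure_iff]

theorem not_mem_of_not_mem_ancestralClosure {C : Set α} {u w : α}
    (hu : u ∉ ancestralClosure E C) (huw : ReflTransGen E u w) : w ∉ C :=
  fun hw => hu (mem_ancestralClosure_iff.2 ⟨w, hw, huw⟩)

theorem IsWalk.of_le {n j : ℕ} {v : ℕ → α} {d : ℕ → Bool} (h : IsWalk E n v d) (hj : j ≤ n) :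
    IsWalk E j v d :=
  fun i hi => h i (hi.trans_le hj)

theorem ActiveWalk.of_le {C : Set α} {n j : ℕ} {v : ℕ → α} {d : ℕ → Bool}
    (h : ActiveWalk E C n v d) (hj : j ≤ n) : ActiveWalk E C j v d :=
  ⟨h.1.of_le hj, fun k hk0 hkj => h.2 k hk0 (hkj.trans_le hj)⟩

theorem ActiveWalk.of_subset {C C' : Set α} {n : ℕ} {v : ℕ → α} {d : ℕ → Bool}
    (h : ActiveWalk E C' n v d) (hC : C ⊆ C')
    (hcol : ∀ k, 0 < k → k < n → IsColliderAt d k → v k ∈ ancestralClosure E C) :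
    ActiveWalk E C n v d :=
  ⟨h.1, fun k hk0 hkn =>
    ⟨hcol k hk0 hkn, fun hnc hk => (h.2 k hk0 hkn).2 hnc (hC hk)⟩⟩

/-- Appending a forward edge `b → c` makes `b` a non-collider, so it only has to avoid `C`. -/
theorem DConnected.tail {C : Set α} {a b c : α} (h : DConnected E C a b) (hb : b ∉ C)
    (hbc : E b c) : DConnected E C a c := by
  obtain ⟨n, v, d, hv0, hvn, hwalk, hact⟩ := h
  refine ⟨n + 1, fun k => if k ≤ n then v k else c, fun k => if k < n then d k else true,
    by simpa using hv0, by simp, fun i hi => ?_, fun k hk0 hkn => ?_⟩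
  · rcases (Nat.lt_succ_iff.1 hi).lt_or_eq with hin | rfl
    · simpa [hin, hin.le, Nat.succ_le_of_lt hin] using hwalk i hin
    · simpa [hvn] using hbc
  · rcases (Nat.lt_succ_iff.1 hkn).lt_or_eq with hkn | rfl
    · have hcol : IsColliderAt (fun k => if k < n then d k else true) k ↔ IsColliderAt d k := by
        simp [IsColliderAt, hkn, show k - 1 < n by omega]
      simpa only [hkn.le, if_true, hcol] using hact k hk0 hkn
    · simpa [IsColliderAt, hvn] using hb

theorem DConnected.trans_reflTransGen {C : Set α} {a b c : α} (h : DConnected E C a b)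
    (hb : b ∉ ancestralClosure E C) (hbc : ReflTransGen E b c) : DConnected E C a c := by
  induction hbc with
  | refl => exact h
  | tail hbx hxy ih => exact ih.tail (not_mem_of_not_mem_ancestralClosure hb hbx) hxy

theorem DConnected.of_union_singleton {C : Set α} {w x y : α} (hyx : Ancestor E y x)
    (h : DConnected E (C ∪ {y}) w x) : DConnected E C w x := by
  classical
  obtain ⟨n, v, d, hv0, hvn, hwalk⟩ := h
  by_cases hclosed : ∃ j, 0 < j ∧ j < n ∧ IsColliderAt d j ∧ v j ∉ ancestralClosure E C
  · set j := Nat.find hclosed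
    obtain ⟨hj0, hjn, hjcol, hjC⟩ : 0 < j ∧ j < n ∧ IsColliderAt d j ∧ v j ∉ ancestralClosure E C :=
      Nat.find_spec hclosed
    have hprefix : DConnected E C w (v j) := by
      refine ⟨j, v, d, hv0, rfl, (hwalk.of_le hjn.le).of_subset subset_union_left
        fun k hk0 hkj hkcol => ?_⟩
      by_contra hk
      exact Nat.find_min hclosed hkj ⟨hk0, hkj.trans hjn, hkcol, hk⟩
    have hjy : ReflTransGen E (v j) y := by
      have hj : v j ∈ ancestralClosure E (C ∪ {y}) := (hwalk.2 j hj0 hjn).1 hjcol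
      rw [ancestralClosure_union] at hj
      exact mem_ancestralClosure_singleton.1 (hj.resolve_left hjC)
    exact hprefix.trans_reflTransGen hjC (hjy.trans hyx.to_reflTransGen)
  · push Not at hclosed
    exact ⟨n, v, d, hv0, hvn, hwalk.of_subset subset_union_left hclosed⟩

end

theorem rule_R2_sound_general {α : Type*} (E : α → α → Prop)
    (X Y : α) (A : Set α) (W : α)
    (hsep : DSeparated E (A \ {W}) W X)
    (hcon : DConnected E ((A \ {W}) ∪ {Y}) W X) :
    ¬ Ancestor E Y X :=
  fun hYX => hsep (hcon.of_union_singleton hYX)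

/-- Soundness of rule (R2): if for some `W ∈ A` (a set of non-descendants of `{X, Y}`),
`W` and `X` are d-separated given `A \ {W}` but d-connected given `(A \ {W}) ∪ {Y}`,
then `X` is not a descendant of `Y`. -/
theorem rule_R2_sound {α : Type*} [Fintype α] (E : α → α → Prop) (hG : Acyclic E)
    (X Y : α) (hXY : X ≠ Y) (A : Set α) (hA : NonDescSet E X Y A) (W : α) (hW : W ∈ A)
    (hsep : DSeparated E (A \ {W}) W X)
    (hcon : DConnected E ((A \ {W}) ∪ {Y}) W X) :
    ¬ Ancestor E Y X :=
  rule_R2_sound_general E X Y A W hsep hcon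
end

section
/- Extension of d-connection along an outgoing edge (lemma used in the proof of Theorem 3). Let G be a DAG on a finite vertex set containing the edge X1 → X2, and let C be a conditioning set with W, X1, X2 ∉ C and W ≠ X2. If W and X1 are d-connected given C, then W and X2 are d-connected given C. -/
/-- Extension of d-connection along an outgoing edge: if the DAG `G` contains the edge
`X1 → X2`, and `W, X1, X2 ∉ C` with `W ≠ X2`, then d-connection of `W` and `X1` given
`C` implies d-connection of `W` and `X2` given `C`. -/
theorem dconnected_extend_edge {α : Type*} [Fintype α] (E : α → α → Prop)
    (hG : Acyclic E) (X1 X2 : α) (hedge : E X1 X2) (W : α) (C : Set α)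
    (hW : W ∉ C) (hX1 : X1 ∉ C) (hX2 : X2 ∉ C) (hWX2 : W ≠ X2)
    (hcon : DConnected E C W X1) :
    DConnected E C W X2 := by
  obtain ⟨n, v, d, hv0, hvn, hwalk, hact⟩ := hcon
  refine ⟨n + 1, fun i => if i ≤ n then v i else X2,
    fun i => if i < n then d i else true, by simp [hv0], by simp, ?_, ?_⟩
  · intro i hi
    rcases lt_or_eq_of_le (Nat.lt_succ_iff.mp hi) with h | h
    · have := hwalk i h
      simp only [if_pos h, if_pos (le_of_lt h), if_pos (Nat.succ_le_of_lt h)]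
      exact this
    · subst h
      simp [hedge, hvn]
  · intro j hj0 hjn
    rcases lt_or_eq_of_le (Nat.lt_succ_iff.mp hjn) with h | h
    · have hact' := hact j hj0 h
      have hj1 : j - 1 < n := lt_of_le_of_lt (Nat.sub_le _ _) h
      simp only [IsColliderAt, if_pos h, if_pos (le_of_lt h), if_pos hj1]
      exact hact'
    · subst h
      constructor
      · intro hc
        exact absurd hc.2 (by simp)
      · intro _
        simp [hvn, hX1, le_refl]
end

section
/- Detectability of ancestral relations via a background parent (sufficiency step in the proof of Theorem 2). Let G be a DAG on a finite vertex set, let X and Y be distinct vertices, let A be a set of non-descendants of {X, Y}, and let V ∈ A be a vertex with an edge V → X in G. If X is an ancestor of Y, then V and Y are d-connected given A \ {V}. Consequently, if in addition V and Y are d-separated given (A \ {V}) ∪ {X}, then the premise of rule (R1) is satisfied with W = V: V and Y are d-connected given A \ {V} and d-separated given (A \ {V}) ∪ {X}. -/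
/-- Extract a vertex sequence from an ancestral relation. -/
lemma ancestor_path {α : Type*} {E : α → α → Prop} {x y : α} (h : Ancestor E x y) :
    ∃ (m : ℕ) (w : ℕ → α), 0 < m ∧ w 0 = x ∧ w m = y ∧ ∀ i < m, E (w i) (w (i+1)) := by
  induction h with
  | @single b hxb =>
    refine ⟨1, fun i => if i = 0 then x else b, one_pos, rfl, rfl, ?_⟩
    intro i hi
    interval_cases i
    simpa using hxb
  | @tail b c hb hbc ih =>
    obtain ⟨m, w, hm, hw0, hwm, hE⟩ := ih
    refine ⟨m + 1, fun i => if i ≤ m then w i else c, hm.trans (Nat.lt_succ_self m),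
      by simp [hw0], by simp, ?_⟩
    intro i hi
    rcases Nat.lt_or_ge i m with h1 | h1
    · simpa [Nat.le_of_lt h1, Nat.succ_le_of_lt h1] using hE i h1
    · have : i = m := by omega
      subst this
      simpa [hwm] using hbc

/-- Detectability of ancestral relations via a background parent: let `A` be a set of
non-descendants of `{X, Y}` and `P ∈ A` a vertex with an edge `P → X`.  If `X` is an
ancestor of `Y`, then `P` and `Y` are d-connected given `A \ {P}`; consequently, if in
addition `P` and `Y` are d-separated given `(A \ {P}) ∪ {X}`, then the premise of rule
(R1) holds with `W = P`. -/
theorem parent_detects_ancestry {α : Type*} [Fintype α] (E : α → α → Prop)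
    (hG : Acyclic E) (X Y : α) (hXY : X ≠ Y) (A : Set α) (hA : NonDescSet E X Y A)
    (P : α) (hP : P ∈ A) (hedge : E P X) :
    (Ancestor E X Y → DConnected E (A \ {P}) P Y) ∧
    (Ancestor E X Y → DSeparated E ((A \ {P}) ∪ {X}) P Y →
      DConnected E (A \ {P}) P Y ∧ DSeparated E ((A \ {P}) ∪ {X}) P Y) := by
  have key : Ancestor E X Y → DConnected E (A \ {P}) P Y := by
    intro hXYanc
    obtain ⟨m, w, hm, hw0, hwm, hE⟩ := ancestor_path hXYanc
    have hanc : ∀ i, i ≤ m → 0 < i → Ancestor E X (w i) := by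
      intro i
      induction i with
      | zero => intro _ h; omega
      | succ k ih =>
        intro hle _
        rcases Nat.eq_zero_or_pos k with hk | hk
        · subst hk
          have := hE 0 (by omega)
          rw [hw0] at this
          exact Relation.TransGen.single this
        · exact (ih (by omega) hk).tail (hE k (by omega))
    refine ⟨m + 1, fun i => if i = 0 then P else w (i - 1), fun _ => true, by simp,
      by simp [hwm], ?_, ?_⟩
    · intro i hi
      simp only [if_pos rfl]
      rcases Nat.eq_zero_or_pos i with h0 | h0
      · subst h0
        simpa [hw0] using hedge
      · have h1 : i ≠ 0 := h0.ne'
        have h2 : i + 1 ≠ 0 := by omega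
        simp only [h1, h2, ite_false]
        have h3 : i + 1 - 1 = (i - 1) + 1 := by omega
        rw [h3]
        exact hE (i - 1) (by omega)
    · intro j hj0 hjn
      constructor
      · rintro ⟨-, hc⟩
        simp at hc
      · intro _
        have hjne : j ≠ 0 := hj0.ne'
        simp only [hjne, ite_false]
        rcases Nat.eq_or_lt_of_le hj0 with h1 | h1
        · have h2 : j - 1 = 0 := by omega
          rw [h2, hw0]
          intro hmem
          exact hA.1 hmem.1
        · have h3 := hanc (j - 1) (by omega) (by omega)
          intro hmem
          exact (hA.2.2 _ hmem.1).1 h3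
  exact ⟨key, fun h1 h2 => ⟨key h1, h2⟩⟩
end

section
/- Blocked confounding implies d-separation of causally unrelated variables (step in the proof of Theorem 2). Let G be a DAG on a finite vertex set, let X and Y be distinct vertices, and let Z be a set of non-descendants of {X, Y}. Suppose that neither X is an ancestor of Y nor Y is an ancestor of X, and that every walk between X and Y whose edge incident to X points into X and whose edge incident to Y points into Y is blocked given Z. Then X and Y are d-separated given Z. -/
/-- If the first edge of an active walk points out of the start, then either the
start is an ancestor of the end, or the start has a descendant in `Z`. -/
lemma start_out {α : Type*} (E : α → α → Prop) (Z : Set α) (n : ℕ) (v : ℕ → α)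
    (d : ℕ → Bool) (hw : IsWalk E n v d) (hA : ActiveCond E Z n v d)
    (hn : 1 ≤ n) (h0 : d 0 = true) :
    Ancestor E (v 0) (v n) ∨ ∃ z ∈ Z, Ancestor E (v 0) z := by
  have hP : ∃ j, j = n ∨ d j = false := ⟨n, Or.inl rfl⟩
  classical
  set m := Nat.find hP with hm
  have hPm := Nat.find_spec hP
  rw [← hm] at hPm
  have hmn : m ≤ n := by
    by_contra h
    push_neg at h
    exact absurd (Or.inl rfl) (Nat.find_min hP h)
  have hforward : ∀ i < m, d i = true := by
    intro i hi
    have := Nat.find_min hP hi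
    push_neg at this
    simpa using this.2
  have hchain : ∀ i, i ≤ m → 0 < i → Relation.TransGen E (v 0) (v i) := by
    intro i
    induction i with
    | zero => intro _ h; omega
    | succ k ih =>
      intro hle _
      have hk : d k = true := hforward k (by omega)
      have hkn : k < n := by omega
      have hedge : E (v k) (v (k+1)) := by
        have := hw k hkn
        simpa [hk] using this
      rcases Nat.eq_zero_or_pos k with h0k | h0k
      · subst h0k
        exact Relation.TransGen.single hedge
      · exact (ih (by omega) h0k).tail hedge
  have hm0 : 0 < m := by
    rcases Nat.eq_zero_or_pos m with h | h
    · exfalso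
      rw [h] at hPm
      rcases hPm with h' | h'
      · omega
      · rw [h0] at h'; exact absurd h' (by simp)
    · exact h
  rcases eq_or_lt_of_le hmn with heq | hmn'
  · exact Or.inl (heq ▸ hchain m le_rfl hm0)
  · have hdm : d m = false := by
      rcases hPm with h | h
      · omega
      · exact h
    have hcol : IsColliderAt d m := by
      constructor
      · exact hforward (m-1) (by omega)
      · exact hdm
    have hanc : Relation.TransGen E (v 0) (v m) := hchain m le_rfl hm0
    rcases (hA m hm0 hmn').1 hcol with hz | ⟨w, hwZ, hww⟩
    · exact Or.inr ⟨v m, hz, hanc⟩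
    · exact Or.inr ⟨w, hwZ, hanc.trans hww⟩

/-- If the last edge of an active walk points out of the end, then either the
end is an ancestor of the start, or the end has a descendant in `Z`. -/
lemma end_out {α : Type*} (E : α → α → Prop) (Z : Set α) (n : ℕ) (v : ℕ → α)
    (d : ℕ → Bool) (hw : IsWalk E n v d) (hA : ActiveCond E Z n v d)
    (hn : 1 ≤ n) (hl : d (n-1) = false) :
    Ancestor E (v n) (v 0) ∨ ∃ z ∈ Z, Ancestor E (v n) z := by
  have hP : ∃ k, k = n ∨ d (n-1-k) = true := ⟨n, Or.inl rfl⟩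
  classical
  set m := Nat.find hP with hm
  have hPm := Nat.find_spec hP
  rw [← hm] at hPm
  have hmn : m ≤ n := by
    by_contra h
    push_neg at h
    exact absurd (Or.inl rfl) (Nat.find_min hP h)
  have hback : ∀ i < m, d (n-1-i) = false := by
    intro i hi
    have := Nat.find_min hP hi
    push_neg at this
    simpa using this.2
  have hchain : ∀ i, i ≤ m → 0 < i → Relation.TransGen E (v n) (v (n-i)) := by
    intro i
    induction i with
    | zero => intro _ h; omega
    | succ k ih =>
      intro hle _
      have hk : d (n-1-k) = false := hback k (by omega)
      have hkn : n-1-k < n := by omega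
      have hedge : E (v (n-1-k+1)) (v (n-1-k)) := by
        have := hw (n-1-k) hkn
        simpa [hk] using this
      have hkm : k + 1 ≤ n := le_trans hle hmn
      have e1 : n - 1 - k + 1 = n - k := by omega
      have e2 : n - 1 - k = n - (k+1) := by omega
      rw [e1, e2] at hedge
      rcases Nat.eq_zero_or_pos k with h0k | h0k
      · subst h0k
        simpa using Relation.TransGen.single hedge
      · exact (ih (by omega) h0k).tail hedge
  have hm0 : 0 < m := by
    rcases Nat.eq_zero_or_pos m with h | h
    · exfalso
      rw [h] at hPm
      rcases hPm with h' | h'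
      · omega
      · simp only [Nat.sub_zero] at h'
        rw [hl] at h'; exact absurd h' (by simp)
    · exact h
  rcases eq_or_lt_of_le hmn with heq | hmn'
  · left
    have := hchain m le_rfl hm0
    rwa [heq, Nat.sub_self] at this
  · have hdm : d (n-1-m) = true := by
      rcases hPm with h | h
      · omega
      · exact h
    have e3 : n - 1 - m = n - m - 1 := by omega
    have hcol : IsColliderAt d (n-m) := by
      constructor
      · rw [← e3]; exact hdm
      · have := hback (m-1) (by omega)
        have e4 : n - 1 - (m-1) = n - m := by omega
        rwa [e4] at this
    have hanc : Relation.TransGen E (v n) (v (n-m)) := hchain m le_rfl hm0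
    rcases (hA (n-m) (by omega) (by omega)).1 hcol with hz | ⟨w, hwZ, hww⟩
    · exact Or.inr ⟨v (n-m), hz, hanc⟩
    · exact Or.inr ⟨w, hwZ, hanc.trans hww⟩

/-- Blocked confounding implies d-separation of causally unrelated variables: if
neither of `X`, `Y` is an ancestor of the other and every walk between `X` and `Y`
whose edges incident to `X` and to `Y` both point inwards is blocked given the
non-descendant set `Z`, then `X` and `Y` are d-separated given `Z`. -/
theorem dseparated_of_blocked_confounding {α : Type*} [Fintype α] (E : α → α → Prop)
    (hG : Acyclic E) (X Y : α) (hXY : X ≠ Y) (Z : Set α) (hZ : NonDescSet E X Y Z)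
    (hnXY : ¬ Ancestor E X Y) (hnYX : ¬ Ancestor E Y X)
    (hblocked : ∀ n v d, IsWalk E n v d → v 0 = X → v n = Y → 1 ≤ n →
      d 0 = false → d (n - 1) = true → ¬ ActiveCond E Z n v d) :
    DSeparated E Z X Y := by
  rintro ⟨n, v, d, h0, hn, hw, hA⟩
  rcases Nat.eq_zero_or_pos n with hn0 | hn1
  · subst hn0; exact hXY (h0 ▸ hn ▸ rfl)
  · rcases Bool.eq_false_or_eq_true (d 0) with hd0 | hd0
    · rcases start_out E Z n v d hw hA hn1 hd0 with h | ⟨z, hzZ, hz⟩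
      · exact hnXY (h0 ▸ hn ▸ h)
      · exact ((hZ.2.2 z hzZ).1) (h0 ▸ hz)
    · rcases Bool.eq_false_or_eq_true (d (n-1)) with hdl | hdl
      · exact hblocked n v d hw h0 hn hn1 hd0 hdl hA
      · rcases end_out E Z n v d hw hA hn1 hdl with h | ⟨z, hzZ, hz⟩
        · exact hnYX (hn ▸ h0 ▸ h)
        · exact ((hZ.2.2 z hzZ).2) (hn ▸ hz)
end

section
/- Core of Theorem 3 (completeness, bivariate case): oracle-indistinguishability of G and G plus one edge. Let G be a DAG on a finite vertex set, let X1 and X2 be distinct vertices, let Z be a set of non-descendants of {X1, X2}, and suppose X2 is not an ancestor of X1, so that G' := G with the edge X1 → X2 added is again a DAG. Suppose that in G: (a) X1 and X2 are d-connected given Z; and (b) for every W ∈ Z, none of the following four patterns holds in G: (i) W and X2 are d-connected given Z \ {W} and d-separated given (Z \ {W}) ∪ {X1}; (ii) W and X1 are d-connected given Z \ {W} and d-separated given (Z \ {W}) ∪ {X2}; (iii) W and X2 are d-separated given Z \ {W} and d-connected given (Z \ {W}) ∪ {X1}; (iv) W and X1 are d-separated given Z \ {W} and d-connected given (Z \ {W})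 ∪ {X2}. Then X1 and X2 are d-connected given Z in G', and for every W ∈ Z none of the four patterns (i)–(iv) holds in G'. -/
/-- For `W ∈ Z`, one of the four (de)activation patterns (i)–(iv) relative to the pair
`(X1, X2)` and conditioning base `Z` holds in the graph with edge relation `E`. -/
def SomePattern {α : Type*} (E : α → α → Prop) (Z : Set α) (X1 X2 W : α) : Prop :=
  (DConnected E (Z \ {W}) W X2 ∧ DSeparated E ((Z \ {W}) ∪ {X1}) W X2) ∨
  (DConnected E (Z \ {W}) W X1 ∧ DSeparated E ((Z \ {W}) ∪ {X2}) W X1) ∨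
  (DSeparated E (Z \ {W}) W X2 ∧ DConnected E ((Z \ {W}) ∪ {X1}) W X2) ∨
  (DSeparated E (Z \ {W}) W X1 ∧ DConnected E ((Z \ {W}) ∪ {X2}) W X1)

/-!
Write `C = Z \ {W}` and `G' = G + (X1 → X2)`. In `G'` only `X1` and its ancestors gain
descendants, so a collider active in `G'` is active in `G` once `X1` is added to the conditioning
set, and one that is active only through `X1` can be cut off and continued along a directed path
of `G` to `X1`. Moreover an active walk of `G'` stopped at its first visit to `X1` or `X2` can use
the new edge only as its last step. Hence `W – X2 | C` in `G'` gives `W – X2 | C` or `W – X1 | C`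
in `G`; `W – X2 | C ∪ {X1}` gives itself; `W – X1 | C` gives itself, since a walk that reached
`X2` and turned back along the new edge would make `X2` a collider without descendant in `C`; and
`W – X1 | C ∪ {X2}` gives itself or `W – X2 | C ∪ {X1}`.

In `G` the absence of the patterns gives `W – X2 | C ⇔ W – X2 | C ∪ {X1}` and
`W – X1 | C ⇔ W – X1 | C ∪ {X2}`, and splicing a walk `W – X1 | C` with a walk `X1 – X2 | Z`,
after rerouting to `W` its colliders active only through `W`, gives `W – X2 | C` or
`W – X2 | C ∪ {X1}`; symmetrically with `X1` and `X2` exchanged. So the four connections in `G`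
are equivalent, and those in `G'` are equivalent to them.
-/

open Relation

def addEdge {α : Type*} (E : α → α → Prop) (x y : α) : α → α → Prop :=
  fun a b => E a b ∨ (a = x ∧ b = y)

section Walks

variable {α : Type*} {E F : α → α → Prop} {C : Set α} {n : ℕ} {v : ℕ → α} {d : ℕ → Bool}

theorem mem_or_exists_ancestor_iff {a : α} :
    (a ∈ C ∨ ∃ w ∈ C, Ancestor E a w) ↔ ∃ w ∈ C, ReflTransGen E a w := by
  simp only [reflTransGen_iff_eq_or_transGen, Ancestor]
  constructor
  · rintro (h | ⟨w, hw, h⟩)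
    exacts [⟨a, h, .inl rfl⟩, ⟨w, hw, .inr h⟩]
  · rintro ⟨w, hw, rfl | h⟩
    exacts [.inl hw, .inr ⟨w, hw, h⟩]

theorem activeWalk_iff : ActiveWalk E C n v d ↔ IsWalk E n v d ∧ ∀ j, 0 < j → j < n →
    (IsColliderAt d j → ∃ w ∈ C, ReflTransGen E (v j) w) ∧ (¬IsColliderAt d j → v j ∉ C) := by
  simp only [ActiveWalk, ActiveCond, mem_or_exists_ancestor_iff]

theorem isWalk_succ : IsWalk E (n + 1) v d ↔
    IsWalk E n v d ∧ if d n = true then E (v n) (v (n + 1)) else E (v (n + 1)) (v n) :=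
  Nat.forall_lt_succ_right

theorem ActiveWalk.mono (hEF : ∀ a b, E a b → F a b) (hw : ActiveWalk E C n v d) :
    ActiveWalk F C n v d := by
  rw [activeWalk_iff] at hw ⊢
  refine ⟨fun i hi => ?_, fun j hj hjn => ⟨fun hc => ?_, (hw.2 j hj hjn).2⟩⟩
  · have h := hw.1 i hi
    split_ifs at h ⊢ <;> exact hEF _ _ h
  · obtain ⟨w, hwC, hvw⟩ := (hw.2 j hj hjn).1 hc
    exact ⟨w, hwC, ReflTransGen.mono hEF _ _ hvw⟩

theorem ActiveWalk.prefix (hw : ActiveWalk E C n v d) {m : ℕ} (hm : m ≤ n) :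
    ActiveWalk E C m v d :=
  ⟨fun i hi => hw.1 i (by omega), fun j hj hjm => hw.2 j hj (by omega)⟩

theorem ActiveWalk.union_singleton (hw : ActiveWalk E C n v d) {b : α}
    (hb : ∀ j, 0 < j → j < n → v j ≠ b) : ActiveWalk E (C ∪ {b}) n v d := by
  rw [activeWalk_iff] at hw ⊢
  refine ⟨hw.1, fun j hj hjn => ⟨fun hc => ?_, fun hc hmem => ?_⟩⟩
  · obtain ⟨w, hwC, hvw⟩ := (hw.2 j hj hjn).1 hc
    exact ⟨w, .inl hwC, hvw⟩
  · rcases hmem with hmem | hmem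
    exacts [(hw.2 j hj hjn).2 hc hmem, hb j hj hjn hmem]

theorem isColliderAt_reverse {j : ℕ} (hj : 0 < j) (hjn : j < n) :
    IsColliderAt (fun i => !d (n - 1 - i)) j ↔ IsColliderAt d (n - j) := by
  simp only [IsColliderAt, show n - 1 - (j - 1) = n - j by omega,
    show n - j - 1 = n - 1 - j by omega]
  cases d (n - j) <;> cases d (n - 1 - j) <;> simp

theorem ActiveWalk.reverse (hw : ActiveWalk E C n v d) :
    ActiveWalk E C n (fun i => v (n - i)) (fun i => !d (n - 1 - i)) := by
  refine ⟨fun i hi => ?_, fun j hj hjn => ?_⟩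
  · have h := hw.1 (n - 1 - i) (by omega)
    rw [show n - 1 - i + 1 = n - i by omega] at h
    beta_reduce
    rw [show n - (i + 1) = n - 1 - i by omega]
    cases hd : d (n - 1 - i) <;> simpa [hd] using h
  · simp only [isColliderAt_reverse hj hjn]
    exact hw.2 (n - j) (by omega) (by omega)

/-- Walking backwards from a descendant of `y` one stays among the descendants of `y`, none of
which can be a collider, and `v 0` is not one of them. -/
theorem ActiveWalk.forward_of_reflTransGen {y : α} (hw : ActiveWalk E C n v d)
    (hC : ∀ c ∈ C, ¬ReflTransGen E y c) (h0 : ¬ReflTransGen E y (v 0)) {i : ℕ} (hi : i < n)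
    (hyi : ReflTransGen E y (v (i + 1))) : d i = true := by
  obtain ⟨hwalk, hact⟩ := activeWalk_iff.mp hw
  induction i with
  | zero =>
    by_contra hd
    exact h0 (hyi.tail (by simpa [hd] using hwalk 0 hi))
  | succ i ih =>
    by_contra hd
    have hy : ReflTransGen E y (v (i + 1)) := hyi.tail (by simpa [hd] using hwalk (i + 1) hi)
    have hcol : ¬IsColliderAt d (i + 1) := fun hc => by
      obtain ⟨w, hwC, hvw⟩ := (hact (i + 1) (by omega) hi).1 hc
      exact hC w hwC (hy.trans hvw)
    exact hcol ⟨ih (by omega) hy, by simpa using hd⟩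

theorem exists_activeWalk_of_reflTransGen {a b : α} (hab : ReflTransGen E a b)
    (hC : ∀ c ∈ C, ¬ReflTransGen E a c) :
    ∃ m p, p 0 = a ∧ p m = b ∧ ActiveWalk E C m p (fun _ => true) := by
  induction hab with
  | refl => exact ⟨0, fun _ => a, rfl, rfl, fun i hi => by omega, fun j hj hj0 => by omega⟩
  | @tail b c hab hbc ih =>
    obtain ⟨m, p, hp0, hpm, hw⟩ := ih
    refine ⟨m + 1, fun i => if i ≤ m then p i else c, by simp [hp0], by simp, ?_⟩
    rw [activeWalk_iff] at hw ⊢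
    refine ⟨isWalk_succ.mpr ⟨fun i hi => ?_, by simpa [hpm] using hbc⟩,
      fun j hj hjm => ⟨fun hc => absurd hc.2 (by simp), fun _ => ?_⟩⟩
    · simpa [show i ≤ m by omega, show i + 1 ≤ m by omega] using hw.1 i hi
    · rcases Nat.lt_or_ge j m with hjm' | hjm'
      · simpa [hjm'.le] using (hw.2 j hj hjm').2 fun hc => absurd hc.2 (by simp)
      · simpa [show j = m by omega, hpm] using fun hb => hC b hb hab

theorem ActiveWalk.dConnected_append {n₁ n₂ : ℕ} {v₁ v₂ : ℕ → α} {d₁ d₂ : ℕ → Bool}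
    (h₁ : ActiveWalk E C n₁ v₁ d₁) (h₂ : ActiveWalk E C n₂ v₂ d₂) (hv : v₁ n₁ = v₂ 0)
    (hjoin : 0 < n₁ → 0 < n₂ →
      (d₁ (n₁ - 1) = true ∧ d₂ 0 = false → ∃ w ∈ C, ReflTransGen E (v₂ 0) w) ∧
      (¬(d₁ (n₁ - 1) = true ∧ d₂ 0 = false) → v₂ 0 ∉ C)) :
    DConnected E C (v₁ 0) (v₂ n₂) := by
  set V : ℕ → α := fun j => if j < n₁ then v₁ j else v₂ (j - n₁)
  set D : ℕ → Bool := fun j => if j < n₁ then d₁ j else d₂ (j - n₁)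
  have hV₁ : ∀ j ≤ n₁, V j = v₁ j := fun j hj => by
    rcases hj.lt_or_eq with hj | rfl
    · simp [V, hj]
    · simp [V, hv]
  have hV₂ : ∀ j ≥ n₁, V j = v₂ (j - n₁) := fun j hj => by simp [V, Nat.not_lt.mpr hj]
  have hD₁ : ∀ j < n₁, D j = d₁ j := fun j hj => by simp [D, hj]
  have hD₂ : ∀ j ≥ n₁, D j = d₂ (j - n₁) := fun j hj => by simp [D, Nat.not_lt.mpr hj]
  rw [activeWalk_iff] at h₁ h₂
  refine ⟨n₁ + n₂, V, D, hV₁ 0 (Nat.zero_le _), by rw [hV₂ _ (by omega), Nat.add_sub_cancel_left],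
    activeWalk_iff.mpr ⟨fun i hi => ?_, fun j hj hjn => ?_⟩⟩
  · rcases Nat.lt_or_ge i n₁ with hi₁ | hi₁
    · rw [hD₁ i hi₁, hV₁ i hi₁.le, hV₁ (i + 1) hi₁]
      exact h₁.1 i hi₁
    · rw [hD₂ i hi₁, hV₂ i hi₁, hV₂ (i + 1) (by omega), show i + 1 - n₁ = i - n₁ + 1 by omega]
      exact h₂.1 (i - n₁) (by omega)
  · rcases lt_trichotomy j n₁ with hj₁ | rfl | hj₁
    · have hcol : IsColliderAt D j ↔ IsColliderAt d₁ j := by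
        simp only [IsColliderAt, hD₁ j hj₁, hD₁ (j - 1) (by omega)]
      rw [hcol, hV₁ j hj₁.le]
      exact h₁.2 j hj hj₁
    · have hcol : IsColliderAt D j ↔ d₁ (j - 1) = true ∧ d₂ 0 = false := by
        simp only [IsColliderAt, hD₁ (j - 1) (by omega), hD₂ j le_rfl, Nat.sub_self]
      rw [hcol, hV₂ j le_rfl, Nat.sub_self]
      exact hjoin hj (by omega)
    · have hcol : IsColliderAt D j ↔ IsColliderAt d₂ (j - n₁) := by
        simp only [IsColliderAt, hD₂ j hj₁.le, hD₂ (j - 1) (by omega),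
          show j - 1 - n₁ = j - n₁ - 1 by omega]
      rw [hcol, hV₂ j hj₁.le]
      exact h₂.2 (j - n₁) (by omega) (by omega)

variable {a b c : α}

theorem DConnected.exists_activeWalk_forall_ne (h : DConnected E C a b) :
    ∃ n v d, v 0 = a ∧ v n = b ∧ ActiveWalk E C n v d ∧ ∀ i < n, v i ≠ b := by
  classical
  obtain ⟨n, v, d, h0, hn, hw⟩ := h
  have hex : ∃ i, v i = b := ⟨n, hn⟩
  exact ⟨Nat.find hex, v, d, h0, Nat.find_spec hex, hw.prefix (Nat.find_min' hex hn),
    fun i hi => Nat.find_min hex hi⟩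

theorem DConnected.symm (h : DConnected E C a b) : DConnected E C b a := by
  obtain ⟨n, v, d, h0, hn, hw⟩ := h
  exact ⟨n, _, _, by simpa using hn, by simpa using h0, hw.reverse⟩

theorem DConnected.mono (hEF : ∀ a b, E a b → F a b) (h : DConnected E C a b) :
    DConnected F C a b := by
  obtain ⟨n, v, d, h0, hn, hw⟩ := h
  exact ⟨n, v, d, h0, hn, hw.mono hEF⟩

theorem dConnected_of_adj (hab : E a b) : DConnected E C a b :=
  ⟨1, fun i => if i = 0 then a else b, fun _ => true, rfl, rfl,
    fun i hi => by simp [show i = 0 by omega, hab], fun j hj hj1 => by omega⟩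

/-- A collider activated only through `t` is cut off and continued along a directed path to
`t`. -/
theorem IsWalk.dConnected_or_of_colliders_insert {t : α} (hw : IsWalk E n v d)
    (hnc : ∀ j, 0 < j → j < n → ¬IsColliderAt d j → v j ∉ C)
    (hcol : ∀ j, 0 < j → j < n → IsColliderAt d j → ∃ w ∈ insert t C, ReflTransGen E (v j) w) :
    DConnected E C (v 0) (v n) ∨ DConnected E C (v 0) t := by
  classical
  by_cases hbad : ∃ j, 0 < j ∧ j < n ∧ IsColliderAt d j ∧ ¬∃ w ∈ C, ReflTransGen E (v j) w
  · right
    obtain ⟨hj, hjn, hjc, hjC⟩ := Nat.find_spec hbad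
    set j := Nat.find hbad
    have hpre : ActiveWalk E C j v d := by
      refine activeWalk_iff.mpr ⟨fun i hi => hw i (by omega),
        fun k hk hkj => ⟨fun hc => ?_, hnc k hk (by omega)⟩⟩
      by_contra hkC
      exact Nat.find_min hbad hkj ⟨hk, by omega, hc, hkC⟩
    have hvt : ReflTransGen E (v j) t := by
      obtain ⟨w, hwC, hvw⟩ := hcol j hj hjn hjc
      rcases hwC with rfl | hwC
      exacts [hvw, absurd ⟨w, hwC, hvw⟩ hjC]
    push Not at hjC
    obtain ⟨m, p, hp0, hpm, hp⟩ := exists_activeWalk_of_reflTransGen hvt hjC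
    rw [← hpm]
    exact hpre.dConnected_append hp hp0.symm fun _ _ =>
      ⟨fun h => absurd h.2 (by simp), fun _ hmem => hjC _ (hp0 ▸ hmem) .refl⟩
  · push Not at hbad
    exact .inl ⟨n, v, d, rfl, rfl,
      activeWalk_iff.mpr ⟨hw, fun j hj hjn => ⟨hbad j hj hjn, hnc j hj hjn⟩⟩⟩

theorem DConnected.trans_or (hab : DConnected E C a b) (hbc : DConnected E C b c) (hb : b ∉ C) :
    DConnected E C a c ∨ DConnected E (C ∪ {b}) a c := by
  obtain ⟨n₁, v₁, d₁, rfl, hv₁, hw₁, hne₁⟩ := hab.exists_activeWalk_forall_ne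
  obtain ⟨n₂, u, e, hu0, hun, hw, hne⟩ := hbc.symm.exists_activeWalk_forall_ne
  set v₂ : ℕ → α := fun i => u (n₂ - i)
  set d₂ : ℕ → Bool := fun i => !e (n₂ - 1 - i)
  have hw₂ : ActiveWalk E C n₂ v₂ d₂ := hw.reverse
  have hv₂0 : v₂ 0 = b := by simpa [v₂] using hun
  have hv₂n : v₂ n₂ = c := by simpa [v₂] using hu0
  rw [← hv₂n]
  by_cases hcoll : 0 < n₁ ∧ 0 < n₂ ∧ d₁ (n₁ - 1) = true ∧ d₂ 0 = false
  · refine .inr ((hw₁.union_singleton fun j _ hj => hne₁ j hj).dConnected_append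
      (hw₂.union_singleton fun j hj hjn => hne _ (by omega)) (hv₁.trans hv₂0.symm) fun _ _ =>
        ⟨fun _ => ⟨b, .inr rfl, hv₂0 ▸ .refl⟩, fun h => absurd hcoll.2.2 h⟩)
  · exact .inl (hw₁.dConnected_append hw₂ (hv₁.trans hv₂0.symm) fun h₁ h₂ =>
      ⟨fun h => absurd ⟨h₁, h₂, h⟩ hcoll, fun _ => hv₂0 ▸ hb⟩)

theorem dConnected_or_of_dConnected_insert {W Y₁ Y₂ : α} (hY₁ : Y₁ ∉ C)
    (hB : DConnected E C W Y₁) (hcon : DConnected E (insert W C) Y₁ Y₂) :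
    DConnected E C W Y₂ ∨ DConnected E (C ∪ {Y₁}) W Y₂ := by
  obtain ⟨n, v, d, hv0, hvn, hw⟩ := hcon.symm
  obtain ⟨hwalk, hact⟩ := activeWalk_iff.mp hw
  rcases hwalk.dConnected_or_of_colliders_insert
      (fun j hj hjn hc hmem => (hact j hj hjn).2 hc (.inr hmem))
      (fun j hj hjn hc => (hact j hj hjn).1 hc) with h | h
  · rw [hv0, hvn] at h
    exact hB.trans_or h.symm hY₁
  · rw [hv0] at h
    exact .inl h.symm

end Walks

section AddEdge

variable {α : Type*} {E : α → α → Prop} {x y a b : α} {C S : Set α} {n : ℕ} {v : ℕ → α}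
  {d : ℕ → Bool}

theorem reflTransGen_addEdge (h : ReflTransGen (addEdge E x y) a b) :
    ReflTransGen E a b ∨ ReflTransGen E a x ∧ ReflTransGen E y b := by
  induction h with
  | refl => exact .inl .refl
  | @tail b c _ hbc ih =>
    rcases hbc with hbc | ⟨rfl, rfl⟩
    · rcases ih with h | ⟨hx, hy⟩
      exacts [.inl (h.tail hbc), .inr ⟨hx, hy.tail hbc⟩]
    · rcases ih with h | ⟨hx, -⟩
      exacts [.inr ⟨h, .refl⟩, .inr ⟨hx, .refl⟩]

theorem reflTransGen_of_addEdge (hb : ¬ReflTransGen E y b)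
    (h : ReflTransGen (addEdge E x y) a b) : ReflTransGen E a b :=
  (reflTransGen_addEdge h).resolve_right fun h => hb h.2

theorem exists_reflTransGen_of_addEdge (h : ∃ w ∈ S, ReflTransGen (addEdge E x y) a w) :
    ∃ w ∈ insert x S, ReflTransGen E a w := by
  obtain ⟨w, hw, haw⟩ := h
  rcases reflTransGen_addEdge haw with h | ⟨h, -⟩
  exacts [⟨w, .inr hw, h⟩, ⟨x, .inl rfl, h⟩]

theorem IsWalk.step_addEdge (hw : IsWalk (addEdge E x y) n v d) {i : ℕ} (hi : i < n) :
    (if d i = true then E (v i) (v (i + 1)) else E (v (i + 1)) (v i)) ∨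
      d i = true ∧ v i = x ∧ v (i + 1) = y ∨ d i = false ∧ v i = y ∧ v (i + 1) = x := by
  have h := hw i hi
  cases hd : d i <;> simp only [hd, if_true, Bool.false_eq_true, if_false, addEdge] at h ⊢ <;>
    tauto

theorem IsWalk.of_addEdge (hw : IsWalk (addEdge E x y) (n + 1) v d)
    (hv : (∀ i ≤ n, v i ≠ x) ∨ ∀ i ≤ n, v i ≠ y) : IsWalk E n v d := by
  intro i hi
  rcases hw.step_addEdge (Nat.lt_succ_of_lt hi) with h | ⟨-, h₁, h₂⟩ | ⟨-, h₁, h₂⟩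
  · exact h
  all_goals rcases hv with hv | hv <;>
    first | exact absurd h₁ (hv i (by omega)) | exact absurd h₂ (hv (i + 1) (by omega))

theorem DConnected.of_addEdge_to_head (hay : a ≠ y) (h : DConnected (addEdge E x y) C a y) :
    DConnected E C a y ∨ DConnected E C a x := by
  obtain ⟨_ | n, v, d, rfl, hn, hw, hfirst⟩ := h.exists_activeWalk_forall_ne
  · exact absurd hn hay
  obtain ⟨hwalk, hact⟩ := activeWalk_iff.mp hw
  have hcol := fun j hj hjn hc => exists_reflTransGen_of_addEdge ((hact j hj hjn).1 hc)
  have hpre := hwalk.of_addEdge (.inr fun i hi => hfirst i (by omega))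
  rcases hwalk.step_addEdge (Nat.lt_succ_self n) with hE | ⟨-, hx, -⟩ | ⟨-, hy, -⟩
  · rw [← hn]
    exact (isWalk_succ.mpr ⟨hpre, hE⟩).dConnected_or_of_colliders_insert
      (fun j hj hjn => (hact j hj hjn).2) hcol
  · have h := hpre.dConnected_or_of_colliders_insert (t := x)
      (fun j hj hjn => (hact j hj (by omega)).2) fun j hj hjn => hcol j hj (by omega)
    rw [hx, or_self] at h
    exact .inr h
  · exact absurd hy (hfirst n (by omega))

theorem DConnected.of_addEdge_to_head_union_tail (hax : a ≠ x) (hay : a ≠ y)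
    (h : DConnected (addEdge E x y) (C ∪ {x}) a y) : DConnected E (C ∪ {x}) a y := by
  obtain ⟨_ | n, v, d, rfl, hn, hw, hfirst⟩ := h.exists_activeWalk_forall_ne
  · exact absurd hn hay
  obtain ⟨hwalk, hact⟩ := activeWalk_iff.mp hw
  have hpre := hwalk.of_addEdge (.inr fun i hi => hfirst i (by omega))
  have hlast : if d n = true then E (v n) (v (n + 1)) else E (v (n + 1)) (v n) := by
    rcases hwalk.step_addEdge (Nat.lt_succ_self n) with hE | ⟨hd, hx, -⟩ | ⟨-, hy, -⟩
    · exact hE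
    · -- the new edge leaves `x`, so `x` is a non-collider in the conditioning set
      obtain _ | k := n
      · exact absurd hx hax
      exact absurd (.inr hx) ((hact (k + 1) (by omega) (by omega)).2 fun hc => by
        simp [IsColliderAt, hd] at hc)
    · exact absurd hy (hfirst n (by omega))
  refine ⟨n + 1, v, d, rfl, hn, activeWalk_iff.mpr ⟨isWalk_succ.mpr ⟨hpre, hlast⟩,
    fun j hj hjn => ⟨fun hc => ?_, (hact j hj hjn).2⟩⟩⟩
  rw [← Set.insert_eq_of_mem (show x ∈ C ∪ {x} from .inr rfl)]
  exact exists_reflTransGen_of_addEdge ((hact j hj hjn).1 hc)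

theorem DConnected.of_addEdge_to_tail (hC : ∀ c ∈ C, ¬ReflTransGen E y c)
    (ha : ¬ReflTransGen E y a) (hax : a ≠ x) (h : DConnected (addEdge E x y) C a x) :
    DConnected E C a x := by
  obtain ⟨_ | n, v, d, rfl, hn, hw, hfirst⟩ := h.exists_activeWalk_forall_ne
  · exact absurd hn hax
  have hC' : ∀ c ∈ C, ¬ReflTransGen (addEdge E x y) y c :=
    fun c hc h => hC c hc (reflTransGen_of_addEdge (hC c hc) h)
  obtain ⟨hwalk, hact⟩ := activeWalk_iff.mp hw
  have hpre := hwalk.of_addEdge (.inl fun i hi => hfirst i (by omega))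
  have hlast : if d n = true then E (v n) (v (n + 1)) else E (v (n + 1)) (v n) := by
    rcases hwalk.step_addEdge (Nat.lt_succ_self n) with hE | ⟨-, hx, -⟩ | ⟨hd, hy, -⟩
    · exact hE
    · exact absurd hx (hfirst n (by omega))
    · -- `y` is entered along a forward edge and left along the new edge: an inactive collider
      obtain _ | k := n
      · exact absurd (hy ▸ .refl) ha
      have hk := hw.forward_of_reflTransGen hC'
        (fun h => ha (reflTransGen_of_addEdge ha h)) (by omega : k < k + 2) (hy ▸ .refl)
      obtain ⟨w, hwC, hyw⟩ := (hact (k + 1) (by omega) (by omega)).1 ⟨hk, hd⟩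
      exact (hC' w hwC (hy ▸ hyw)).elim
  refine ⟨n + 1, v, d, rfl, hn, activeWalk_iff.mpr ⟨isWalk_succ.mpr ⟨hpre, hlast⟩,
    fun j hj hjn => ⟨fun hc => ?_, (hact j hj hjn).2⟩⟩⟩
  obtain ⟨w, hwC, hvw⟩ := (hact j hj hjn).1 hc
  exact ⟨w, hwC, reflTransGen_of_addEdge (hC w hwC) hvw⟩

theorem DConnected.of_addEdge_to_tail_union_head (hax : a ≠ x)
    (h : DConnected (addEdge E x y) (C ∪ {y}) a x) :
    DConnected E (C ∪ {y}) a x ∨ DConnected E (C ∪ {x}) a y := by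
  obtain ⟨_ | n, v, d, rfl, hn, hw, hfirst⟩ := h.exists_activeWalk_forall_ne
  · exact absurd hn hax
  obtain ⟨hwalk, hact⟩ := activeWalk_iff.mp hw
  have hcol := fun j hj hjn hc => exists_reflTransGen_of_addEdge ((hact j hj hjn).1 hc)
  have hpre := hwalk.of_addEdge (.inl fun i hi => hfirst i (by omega))
  rcases hwalk.step_addEdge (Nat.lt_succ_self n) with hE | ⟨-, hx, -⟩ | ⟨-, hy, -⟩
  · have h := (isWalk_succ.mpr ⟨hpre, hE⟩).dConnected_or_of_colliders_insert
      (fun j hj hjn => (hact j hj hjn).2) hcol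
    rw [hn, or_self] at h
    exact .inl h
  · exact absurd hx (hfirst n (by omega))
  · have h := hpre.dConnected_or_of_colliders_insert (C := C ∪ {x}) (t := y)
      (fun j hj hjn hc hmem => hmem.elim ((hact j hj (by omega)).2 hc ∘ .inl)
        (hfirst j (by omega)))
      fun j hj hjn hc => by
        obtain ⟨w, hwC, hvw⟩ := hcol j hj (by omega) hc
        exact ⟨w, by simp only [Set.union_singleton, Set.mem_insert_iff] at hwC ⊢; tauto, hvw⟩
    rw [hy, or_self] at h
    exact .inr h

end AddEdge

theorem not_somePattern_iff {α : Type*} {E : α → α → Prop} {Z : Set α} {X1 X2 W : α} :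
    ¬SomePattern E Z X1 X2 W ↔
      (DConnected E (Z \ {W}) W X2 ↔ DConnected E ((Z \ {W}) ∪ {X1}) W X2) ∧
      (DConnected E (Z \ {W}) W X1 ↔ DConnected E ((Z \ {W}) ∪ {X2}) W X1) := by
  unfold SomePattern DSeparated
  tauto

theorem oracle_indistinguishable_add_edge_general {α : Type*} (E : α → α → Prop)
    (X1 X2 : α) (Z : Set α)
    (hZ : NonDescSet E X1 X2 Z)
    (E' : α → α → Prop) (hE' : E' = fun a b => E a b ∨ (a = X1 ∧ b = X2))
    (hcon : DConnected E Z X1 X2)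
    (hpat : ∀ W ∈ Z, ¬ SomePattern E Z X1 X2 W) :
    DConnected E' Z X1 X2 ∧ ∀ W ∈ Z, ¬ SomePattern E' Z X1 X2 W := by
  obtain ⟨hX1, hX2, hdesc⟩ := hZ
  obtain rfl : E' = addEdge E X1 X2 := hE'
  refine ⟨dConnected_of_adj (.inr ⟨rfl, rfl⟩), fun W hW => ?_⟩
  obtain ⟨hA, hB⟩ := not_somePattern_iff.mp (hpat W hW)
  have hWX1 : W ≠ X1 := fun h => hX1 (h ▸ hW)
  have hWX2 : W ≠ X2 := fun h => hX2 (h ▸ hW)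
  have hnd : ∀ c ∈ Z, ¬ReflTransGen E X2 c := fun c hc h =>
    (reflTransGen_iff_eq_or_transGen.mp h).elim (fun h => hX2 (h ▸ hc)) (hdesc c hc).2
  have hZW : insert W (Z \ {W}) = Z := by simp [hW]
  have hBA : DConnected E (Z \ {W}) W X1 → DConnected E (Z \ {W}) W X2 := fun h =>
    (dConnected_or_of_dConnected_insert (fun h => hX1 h.1) h (by rwa [hZW])).elim id hA.mpr
  have hAB : DConnected E (Z \ {W}) W X2 → DConnected E (Z \ {W}) W X1 := fun h =>
    (dConnected_or_of_dConnected_insert (fun h => hX2 h.1) h (by rw [hZW]; exact hcon.symm)).elim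
      id hB.mpr
  have hmono {C : Set α} {a b : α} (h : DConnected E C a b) :
      DConnected (addEdge E X1 X2) C a b := h.mono fun _ _ => .inl
  refine not_somePattern_iff.mpr ⟨⟨fun h => ?_, fun h => ?_⟩, ⟨fun h => ?_, fun h => ?_⟩⟩
  · exact hmono (hA.mp ((h.of_addEdge_to_head hWX2).elim id hBA))
  · exact hmono (hA.mpr (h.of_addEdge_to_head_union_tail hWX1 hWX2))
  · exact hmono (hB.mp (h.of_addEdge_to_tail (fun c hc => hnd c hc.1) (hnd W hW) hWX1))
  · exact hmono (hAB ((h.of_addEdge_to_tail_union_head hWX1).elim (hBA ∘ hB.mpr) hA.mpr))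

/-- Core of the completeness theorem (bivariate case): if in the DAG `G` the vertices
`X1` and `X2` are d-connected given the non-descendant set `Z` and none of the four
(de)activation patterns holds for any `W ∈ Z`, then the same is true in the DAG `G'`
obtained from `G` by adding the edge `X1 → X2`; hence the lazy oracle cannot
distinguish `G` from `G'`. -/
theorem oracle_indistinguishable_add_edge {α : Type*} [Fintype α] (E : α → α → Prop)
    (hG : Acyclic E) (X1 X2 : α) (hne : X1 ≠ X2) (Z : Set α)
    (hZ : NonDescSet E X1 X2 Z) (hnanc : ¬ Ancestor E X2 X1)
    (E' : α → α → Prop) (hE' : E' = fun a b => E a b ∨ (a = X1 ∧ b = X2))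
    (hcon : DConnected E Z X1 X2)
    (hpat : ∀ W ∈ Z, ¬ SomePattern E Z X1 X2 W) :
    DConnected E' Z X1 X2 ∧ ∀ W ∈ Z, ¬ SomePattern E' Z X1 X2 W :=
  oracle_indistinguishable_add_edge_general E X1 X2 Z hZ E' hE' hcon hpat
end

section
/- Theorem 1, probabilistic form of rule (R1). Let (Ω, 𝓕, μ) be a probability space, V a finite set, (ξ_v)_{v∈V} real-valued random variables on Ω, G a DAG on V, and O ⊆ V a set of observed vertices such that the observed distribution is Markov and faithful to G. Let X, Y ∈ O be distinct, let A ⊆ O be a set of non-descendants of {X, Y} in G, and let W ∈ A. If {W} ⫫ {Y} | A \ {W} fails and {W} ⫫ {Y} | (A \ {W}) ∪ {X} holds, then X is an ancestor of Y in G. -/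
open MeasureTheory ProbabilityTheory

/-- The σ-algebra on `Ω` generated by the random variables `ξ v` for `v ∈ S`. -/
def sigmaAlg {Ω ι : Type*} (ξ : ι → Ω → ℝ) (S : Set ι) : MeasurableSpace Ω :=
  ⨆ v ∈ S, MeasurableSpace.comap (ξ v) inferInstance

/-- `A ⫫ B | C` : the σ-algebras generated by the variables indexed by `A` and by `B`
are conditionally independent given the σ-algebra generated by those indexed by `C`. -/
def CondIndepOf {Ω ι : Type*} [MeasurableSpace Ω] [StandardBorelSpace Ω]
    (μ : Measure Ω) [IsFiniteMeasure μ] (ξ : ι → Ω → ℝ) (hξ : ∀ v, Measurable (ξ v))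
    (A B C : Set ι) : Prop :=
  ProbabilityTheory.CondIndep (sigmaAlg ξ C) (sigmaAlg ξ A) (sigmaAlg ξ B)
    (iSup₂_le fun v _ => (hξ v).comap_le) μ

/-- The observed distribution (of the variables indexed by `O`) is Markov and faithful
to the DAG with edge relation `E`: for all pairwise disjoint `A, B, C ⊆ O` with `A, B`
nonempty, `A ⫫ B | C` holds iff every `a ∈ A` and `b ∈ B` are d-separated given `C`. -/
def MarkovFaithful {Ω ι : Type*} [MeasurableSpace Ω] [StandardBorelSpace Ω]
    (μ : Measure Ω) [IsFiniteMeasure μ] (ξ : ι → Ω → ℝ) (hξ : ∀ v, Measurable (ξ v))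
    (E : ι → ι → Prop) (O : Set ι) : Prop :=
  ∀ A B C : Set ι, A ⊆ O → B ⊆ O → C ⊆ O →
    Disjoint A B → Disjoint A C → Disjoint B C → A.Nonempty → B.Nonempty →
    (CondIndepOf μ ξ hξ A B C ↔ ∀ a ∈ A, ∀ b ∈ B, DSeparated E C a b)

/-- Following a walk forwards from a forward edge: either we reach the end by a
directed path, or we hit a collider, whose activation gives a descendant in `C`. -/
lemma walk_fwd {α : Type*} {E : α → α → Prop} {C : Set α} {n : ℕ} {v : ℕ → α}
    {d : ℕ → Bool} (hw : IsWalk E n v d) (ha : ActiveCond E C n v d) :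
    ∀ k j, n - j ≤ k → j < n → d j = true →
      Relation.TransGen E (v j) (v n) ∨ ∃ a ∈ C, Relation.TransGen E (v j) a := by
  intro k
  induction k with
  | zero => intro j hk hj _; omega
  | succ k ih =>
    intro j hk hj hd
    have hedge : E (v j) (v (j+1)) := by
      have := hw j hj; simpa [hd] using this
    by_cases h1 : j + 1 = n
    · left; rw [← h1]; exact Relation.TransGen.single hedge
    · have hj1 : j + 1 < n := by omega
      cases hdj1 : d (j+1) with
      | false =>
        have hcol : IsColliderAt d (j+1) := by
          constructor
          · simpa using hd
          · exact hdj1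
        have := (ha (j+1) (by omega) hj1).1 hcol
        right
        rcases this with h | ⟨w, hwC, hww⟩
        · exact ⟨v (j+1), h, Relation.TransGen.single hedge⟩
        · exact ⟨w, hwC, (Relation.TransGen.single hedge).trans hww⟩
      | true =>
        rcases ih (j+1) (by omega) hj1 hdj1 with h | ⟨a, haC, haa⟩
        · exact Or.inl (Relation.TransGen.head hedge h)
        · exact Or.inr ⟨a, haC, Relation.TransGen.head hedge haa⟩

/-- Following a walk backwards from a backward edge: either we reach the start by a
directed path, or we hit a collider, whose activation gives a descendant in `C`. -/
lemma walk_bwd {α : Type*} {E : α → α → Prop} {C : Set α} {n : ℕ} {v : ℕ → α}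
    {d : ℕ → Bool} (hw : IsWalk E n v d) (ha : ActiveCond E C n v d) :
    ∀ k j, j ≤ k → j < n → d j = false →
      Relation.TransGen E (v (j+1)) (v 0) ∨ ∃ a ∈ C, Relation.TransGen E (v (j+1)) a := by
  intro k
  induction k with
  | zero =>
    intro j hk hj hd
    have hj0 : j = 0 := Nat.le_zero.mp hk
    subst hj0
    have hedge : E (v 1) (v 0) := by have := hw 0 hj; simpa [hd] using this
    exact Or.inl (Relation.TransGen.single hedge)
  | succ k ih =>
    intro j hk hj hd
    have hedge : E (v (j+1)) (v j) := by have := hw j hj; simpa [hd] using this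
    rcases Nat.eq_zero_or_pos j with h0 | hpos
    · subst h0; exact Or.inl (Relation.TransGen.single hedge)
    · cases hdj1 : d (j-1) with
      | true =>
        have hcol : IsColliderAt d j := ⟨hdj1, hd⟩
        have := (ha j hpos hj).1 hcol
        right
        rcases this with h | ⟨w, hwC, hww⟩
        · exact ⟨v j, h, Relation.TransGen.single hedge⟩
        · exact ⟨w, hwC, (Relation.TransGen.single hedge).trans hww⟩
      | false =>
        have hrec := ih (j-1) (by omega) (by omega) hdj1
        have hv : v (j - 1 + 1) = v j := by congr 1; omega
        rw [hv] at hrec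
        rcases hrec with h | ⟨a, haC, haa⟩
        · exact Or.inl (Relation.TransGen.head hedge h)
        · exact Or.inr ⟨a, haC, Relation.TransGen.head hedge haa⟩

/-- Theorem 1, probabilistic form of rule (R1): under Markov and faithfulness, if the
conditional independence `{W} ⫫ {Y} | A \ {W}` fails while
`{W} ⫫ {Y} | (A \ {W}) ∪ {X}` holds, for `W` in a set `A ⊆ O` of non-descendants of
`{X, Y}`, then `X` is an ancestor of `Y`. -/
theorem rule_R1_probabilistic {Ω ι : Type*} [MeasurableSpace Ω] [StandardBorelSpace Ω]
    [Fintype ι] (μ : Measure Ω) [IsProbabilityMeasure μ]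
    (ξ : ι → Ω → ℝ) (hξ : ∀ v, Measurable (ξ v))
    (E : ι → ι → Prop) (hG : Acyclic E) (O : Set ι)
    (hMF : MarkovFaithful μ ξ hξ E O)
    (X Y : ι) (hXO : X ∈ O) (hYO : Y ∈ O) (hXY : X ≠ Y)
    (A : Set ι) (hAO : A ⊆ O) (hA : NonDescSet E X Y A) (W : ι) (hW : W ∈ A)
    (hdep : ¬ CondIndepOf μ ξ hξ {W} {Y} (A \ {W}))
    (hind : CondIndepOf μ ξ hξ {W} {Y} ((A \ {W}) ∪ {X})) :
    Ancestor E X Y := by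
  obtain ⟨hXA, hYA, hND⟩ := hA
  have hWX : W ≠ X := fun h => hXA (h ▸ hW)
  have hWY : W ≠ Y := fun h => hYA (h ▸ hW)
  set C : Set ι := A \ {W} with hC
  have hCO : C ⊆ O := fun x hx => hAO hx.1
  have hdisWY : Disjoint ({W} : Set ι) {Y} := by simp [hWY]
  have hdisWC : Disjoint ({W} : Set ι) C := by
    simp [hC, Set.disjoint_left]
  have hdisYC : Disjoint ({Y} : Set ι) C := by
    simp only [Set.disjoint_left, Set.mem_singleton_iff]
    rintro x rfl hx; exact hYA hx.1
  have hdisYC' : Disjoint ({Y} : Set ι) (C ∪ {X}) := by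
    refine Disjoint.union_right hdisYC ?_
    simp [hXY.symm]
  have hdisWC' : Disjoint ({W} : Set ι) (C ∪ {X}) := by
    refine Disjoint.union_right hdisWC ?_
    simp [hWX]
  -- d-connected given C
  have hcon : DConnected E C W Y := by
    by_contra hcon
    apply hdep
    refine (hMF {W} {Y} C (by simpa using hAO hW) (by simpa using hYO) hCO
      hdisWY hdisWC hdisYC ⟨W, rfl⟩ ⟨Y, rfl⟩).mpr ?_
    rintro a rfl b rfl
    exact hcon
  -- d-separated given C ∪ {X}
  have hsep : DSeparated E (C ∪ {X}) W Y := by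
    have := (hMF {W} {Y} (C ∪ {X})
      (by simpa using hAO hW) (by simpa using hYO)
      (Set.union_subset hCO (by simpa using hXO))
      hdisWY hdisWC' hdisYC' ⟨W, rfl⟩ ⟨Y, rfl⟩).mp hind
    exact this W rfl Y rfl
  obtain ⟨n, v, d, hv0, hvn, hw, ha⟩ := hcon
  -- some interior non-collider of the walk equals X
  have hX : ∃ j, 0 < j ∧ j < n ∧ ¬ IsColliderAt d j ∧ v j = X := by
    by_contra hnx
    push_neg at hnx
    apply hsep
    refine ⟨n, v, d, hv0, hvn, hw, ?_⟩
    intro j hj0 hjn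
    refine ⟨fun hcol => ?_, fun hncol => ?_⟩
    · rcases (ha j hj0 hjn).1 hcol with h | h
      · exact Or.inl (Or.inl h)
      · exact Or.inr ⟨h.choose, Or.inl h.choose_spec.1, h.choose_spec.2⟩
    · have h1 : v j ∉ C := (ha j hj0 hjn).2 hncol
      have h2 : v j ≠ X := hnx j hj0 hjn hncol
      simp only [Set.mem_union, Set.mem_singleton_iff]
      tauto
  obtain ⟨j, hj0, hjn, hncol, hvj⟩ := hX
  -- X is not an ancestor of anything in C, nor of W
  have hnoC : ¬ ∃ a ∈ C, Relation.TransGen E X a := by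
    rintro ⟨a, haC, haa⟩
    exact (hND a haC.1).1 haa
  cases hdj : d j with
  | true =>
    rcases walk_fwd hw ha (n - j) j le_rfl hjn hdj with h | h
    · rw [hvj, hvn] at h; exact h
    · rw [hvj] at h; exact absurd h hnoC
  | false =>
    have hdj1 : d (j - 1) = false := by
      cases h : d (j-1)
      · rfl
      · exact absurd ⟨h, hdj⟩ hncol
    have hrec := walk_bwd hw ha (j-1) (j-1) le_rfl (by omega) hdj1
    have hv : v (j - 1 + 1) = v j := by congr 1; omega
    rw [hv, hvj, hv0] at hrec
    rcases hrec with h | h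
    · exact absurd h (hND W hW).1
    · exact absurd h hnoC
end

section
/- Theorem 1, probabilistic form of rule (R2). Let (Ω, 𝓕, μ) be a probability space, V a finite set, (ξ_v)_{v∈V} real-valued random variables on Ω, G a DAG on V, and O ⊆ V a set of observed vertices such that the observed distribution is Markov and faithful to G. Let X, Y ∈ O be distinct, let A ⊆ O be a set of non-descendants of {X, Y} in G, and let W ∈ A. If {W} ⫫ {X} | A \ {W} holds and {W} ⫫ {X} | (A \ {W}) ∪ {Y} fails, then X is not a descendant of Y in G. -/
open MeasureTheory ProbabilityTheory

lemma exists_chain_of_ancestor {α : Type*} {E : α → α → Prop} {a b : α}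
    (h : Ancestor E a b) :
    ∃ m : ℕ, 0 < m ∧ ∃ u : ℕ → α, u 0 = a ∧ u m = b ∧ ∀ i < m, E (u i) (u (i+1)) := by
  induction h with
  | @single c hab =>
      refine ⟨1, Nat.one_pos, fun i => if i = 0 then a else c, by simp, by simp, ?_⟩
      intro i hi
      interval_cases i
      simpa using hab
  | @tail b c hab hbc ih =>
      obtain ⟨m, hm, u, hu0, hum, hedge⟩ := ih
      refine ⟨m + 1, Nat.succ_pos _, fun i => if i = m + 1 then c else u i,
        by simp [hu0], by simp, ?_⟩
      intro i hi
      rcases Nat.lt_or_ge i m with h1 | h1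
      · have e1 : i ≠ m + 1 := by omega
        have e2 : i + 1 ≠ m + 1 := by omega
        simp only [e1, e2, if_false]
        exact hedge i h1
      · have e0 : i = m := by omega
        subst e0
        have e1 : i ≠ i + 1 := by omega
        simp only [e1, if_false, if_pos rfl]
        rw [hum]
        exact hbc

lemma ancestor_of_chain {α : Type*} {E : α → α → Prop} {m : ℕ} {u : ℕ → α}
    (hedge : ∀ i < m, E (u i) (u (i+1))) :
    ∀ t, 0 < t → t ≤ m → Ancestor E (u 0) (u t) := by
  intro t
  induction t with
  | zero => intro h; exact absurd h (lt_irrefl _)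
  | succ t ih =>
      intro _ htm
      rcases Nat.eq_zero_or_pos t with h0 | hpos
      · subst h0; exact Relation.TransGen.single (hedge 0 (by omega))
      · exact (ih hpos (by omega)).tail (hedge t (by omega))

/-- Theorem 1, probabilistic form of rule (R2): under Markov and faithfulness, if the
conditional independence `{W} ⫫ {X} | A \ {W}` holds while
`{W} ⫫ {X} | (A \ {W}) ∪ {Y}` fails, for `W` in a set `A ⊆ O` of non-descendants of
`{X, Y}`, then `X` is not a descendant of `Y`. -/
theorem rule_R2_probabilistic {Ω ι : Type*} [MeasurableSpace Ω] [StandardBorelSpace Ω]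
    [Fintype ι] (μ : Measure Ω) [IsProbabilityMeasure μ]
    (ξ : ι → Ω → ℝ) (hξ : ∀ v, Measurable (ξ v))
    (E : ι → ι → Prop) (hG : Acyclic E) (O : Set ι)
    (hMF : MarkovFaithful μ ξ hξ E O)
    (X Y : ι) (hXO : X ∈ O) (hYO : Y ∈ O) (hXY : X ≠ Y)
    (A : Set ι) (hAO : A ⊆ O) (hA : NonDescSet E X Y A) (W : ι) (hW : W ∈ A)
    (hind : CondIndepOf μ ξ hξ {W} {X} (A \ {W}))
    (hdep : ¬ CondIndepOf μ ξ hξ {W} {X} ((A \ {W}) ∪ {Y})) :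
    ¬ Ancestor E Y X := by
  classical
  intro hYX
  have hXA : X ∉ A := hA.1
  have hYA : Y ∉ A := hA.2.1
  have hWX : W ≠ X := fun h => hXA (h ▸ hW)
  have hWY : W ≠ Y := fun h => hYA (h ▸ hW)
  set C : Set ι := A \ {W} with hCdef
  have hWC : W ∉ C := fun h => h.2 rfl
  have hXC : X ∉ C := fun h => hXA h.1
  have hYC : Y ∉ C := fun h => hYA h.1
  have hCO : C ⊆ O := fun x hx => hAO hx.1
  have hC'O : (C ∪ {Y} : Set ι) ⊆ O := by
    intro x hx
    rcases hx with hx | hx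
    · exact hCO hx
    · rw [Set.mem_singleton_iff] at hx; exact hx ▸ hYO
  have hdWX : Disjoint ({W} : Set ι) {X} := Set.disjoint_singleton.mpr hWX
  have hdWC : Disjoint ({W} : Set ι) C := Set.disjoint_singleton_left.mpr hWC
  have hdXC : Disjoint ({X} : Set ι) C := Set.disjoint_singleton_left.mpr hXC
  have hdWC' : Disjoint ({W} : Set ι) (C ∪ {Y}) := by
    refine Set.disjoint_singleton_left.mpr ?_
    rintro (h | h)
    · exact hWC h
    · exact hWY (Set.mem_singleton_iff.mp h)
  have hdXC' : Disjoint ({X} : Set ι) (C ∪ {Y}) := by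
    refine Set.disjoint_singleton_left.mpr ?_
    rintro (h | h)
    · exact hXC h
    · exact hXY (Set.mem_singleton_iff.mp h)
  -- from independence: d-separation given C
  have hsep : DSeparated E C W X :=
    ((hMF {W} {X} C (Set.singleton_subset_iff.mpr (hAO hW))
        (Set.singleton_subset_iff.mpr hXO) hCO hdWX hdWC hdXC
        (Set.singleton_nonempty W) (Set.singleton_nonempty X)).mp hind) W rfl X rfl
  -- from dependence: d-connection given C ∪ {Y}
  have hcon : DConnected E (C ∪ {Y}) W X := by
    by_contra hc
    apply hdep
    refine (hMF {W} {X} (C ∪ {Y}) (Set.singleton_subset_iff.mpr (hAO hW))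
        (Set.singleton_subset_iff.mpr hXO) hC'O hdWX hdWC' hdXC'
        (Set.singleton_nonempty W) (Set.singleton_nonempty X)).mpr ?_
    intro a ha b hb
    rw [Set.mem_singleton_iff] at ha hb
    subst ha; subst hb
    exact hc
  obtain ⟨n, v, d, hv0, hvn, hwalk, hact⟩ := hcon
  -- "blocked" colliders: colliders blocked given C
  set blocked : ℕ → Prop :=
    fun j => 0 < j ∧ j < n ∧ IsColliderAt d j ∧ v j ∉ C ∧ ¬ ∃ w ∈ C, Ancestor E (v j) w
    with hblockeddef
  by_cases hS : ∃ j, blocked j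
  · -- splice at the first blocked collider
    obtain ⟨hj0, hjn, hjcol, hjC, hjdesc⟩ := Nat.find_spec hS
    set j : ℕ := Nat.find hS with hjdef
    have hmin : ∀ k < j, ¬ blocked k := fun k hk => Nat.find_min hS hk
    -- the blocked collider is an ancestor of X
    have hAncX : Ancestor E (v j) X := by
      rcases (hact j hj0 hjn).1 hjcol with h | ⟨w, hw, hanc⟩
      · rcases h with h | h
        · exact absurd h hjC
        · rw [Set.mem_singleton_iff] at h
          rw [h]; exact hYX
      · rcases hw with hw | hw
        · exact absurd ⟨w, hw, hanc⟩ hjdesc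
        · rw [Set.mem_singleton_iff] at hw
          subst hw
          exact hanc.trans hYX
    obtain ⟨m, hm, u, hu0, hum, hedge⟩ := exists_chain_of_ancestor hAncX
    -- interior vertices of the directed chain are not in C
    have huC : ∀ t, 0 < t → t ≤ m → u t ∉ C := by
      intro t ht0 htm hin
      exact hjdesc ⟨u t, hin, hu0 ▸ ancestor_of_chain hedge t ht0 htm⟩
    -- spliced walk
    set v' : ℕ → ι := fun i => if i ≤ j then v i else u (i - j) with hv'def
    set d' : ℕ → Bool := fun i => if i < j then d i else true with hd'def
    have hv'le : ∀ i, i ≤ j → v' i = v i := by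
      intro i hi; simp only [hv'def]; rw [if_pos hi]
    have hd'lt : ∀ i, i < j → d' i = d i := by
      intro i hi; simp only [hd'def]; rw [if_pos hi]
    have hd'ge : ∀ i, j ≤ i → d' i = true := by
      intro i hi; simp only [hd'def]; rw [if_neg (Nat.not_lt.mpr hi)]
    have hv'u : ∀ i, j ≤ i → v' i = u (i - j) := by
      intro i hi
      rcases eq_or_lt_of_le hi with h | h
      · subst h
        rw [hv'le j le_rfl, Nat.sub_self, hu0]
      · simp only [hv'def]; rw [if_neg (by omega : ¬ i ≤ j)]
    apply hsep
    refine ⟨j + m, v', d', ?_, ?_, ?_, ?_⟩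
    · rw [hv'le 0 (Nat.zero_le j)]; exact hv0
    · rw [hv'u (j + m) (by omega)]
      simpa using hum
    · -- IsWalk
      intro i hi
      rcases Nat.lt_or_ge i j with h1 | h1
      · rw [hv'le i (Nat.le_of_lt h1), hv'le (i+1) h1, hd'lt i h1]
        exact hwalk i (by omega)
      · rw [hd'ge i h1, if_pos rfl, hv'u i h1, hv'u (i+1) (by omega)]
        have e4 : i + 1 - j = (i - j) + 1 := by omega
        rw [e4]
        exact hedge (i - j) (by omega)
    · -- ActiveCond given C
      intro k hk0 hkn
      rcases Nat.lt_or_ge k j with h1 | h1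
      · have e1 : d' (k-1) = d (k-1) := hd'lt (k-1) (by omega)
        have e2 : d' k = d k := hd'lt k h1
        have ecol : IsColliderAt d' k ↔ IsColliderAt d k := by
          unfold IsColliderAt; rw [e1, e2]
        have ev : v' k = v k := hv'le k (Nat.le_of_lt h1)
        rw [ecol, ev]
        constructor
        · intro hcol
          by_contra hcontra
          push_neg at hcontra
          exact hmin k h1 ⟨hk0, by omega, hcol, hcontra.1, fun ⟨w, hw, ha⟩ => hcontra.2 w hw ha⟩
        · intro hnc
          have := (hact k hk0 (by omega)).2 hnc
          intro hin
          exact this (Or.inl hin)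
      rcases eq_or_lt_of_le h1 with h2 | h2
      · -- k = j : now a non-collider, and v j ∉ C
        have e2 : d' k = true := hd'ge k h1
        have ev : v' k = v j := by rw [← h2]; exact hv'le j le_rfl
        constructor
        · intro hcol
          have hc2 := hcol.2
          rw [e2] at hc2
          simp at hc2
        · intro _
          rw [ev]; exact hjC
      · -- k > j : interior of the directed chain, a non-collider, not in C
        have e2 : d' k = true := hd'ge k (by omega)
        constructor
        · intro hcol
          have hc2 := hcol.2
          rw [e2] at hc2
          simp at hc2
        · intro _
          rw [hv'u k (le_of_lt h2)]
          exact huC (k - j) (by omega) (by omega)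
  · -- no blocked collider: the walk is already active given C
    push_neg at hS
    apply hsep
    refine ⟨n, v, d, hv0, hvn, hwalk, ?_⟩
    intro k hk0 hkn
    constructor
    · intro hcol
      by_contra hcontra
      push_neg at hcontra
      exact hS k ⟨hk0, hkn, hcol, hcontra.1, fun ⟨w, hw, ha⟩ => hcontra.2 w hw ha⟩
    · intro hnc
      have := (hact k hk0 hkn).2 hnc
      intro hin
      exact this (Or.inl hin)
end

section
/- Theorem 1, probabilistic form of rule (R3). Let (Ω, 𝓕, μ) be a probability space, V a finite set, (ξ_v)_{v∈V} real-valued random variables on Ω, G a DAG on V, and O ⊆ V a set of observed vertices such that the observed distribution is Markov and faithful to G. Let X, Y ∈ O be distinct and let A ⊆ O be a set of non-descendants of {X, Y} in G. If {X} ⫫ {Y} | A holds, then X is not an ancestor of Y and Y is not an ancestor of X in G. -/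
open MeasureTheory ProbabilityTheory

lemma chain_of_transGen {α : Type*} {E : α → α → Prop} {x y : α}
    (h : Relation.TransGen E x y) :
    ∃ (n : ℕ) (v : ℕ → α), 0 < n ∧ v 0 = x ∧ v n = y ∧ ∀ i < n, E (v i) (v (i+1)) := by
  induction h with
  | @single b h =>
    refine ⟨1, fun i => if i = 0 then x else b, one_pos, by simp, by simp, ?_⟩
    intro i hi
    interval_cases i
    simpa using h
  | @tail b c hxb hbc ih =>
    obtain ⟨n, v, hn, h0, hnb, hedge⟩ := ih
    refine ⟨n + 1, Function.update v (n+1) c, by omega, ?_, by simp, ?_⟩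
    · rw [Function.update_of_ne (by omega)]; exact h0
    · intro i hi
      rcases Nat.lt_or_ge i n with h | h
      · rw [Function.update_of_ne (by omega), Function.update_of_ne (by omega)]
        exact hedge i h
      · have : i = n := by omega
        subst this
        rw [Function.update_of_ne (by omega), Function.update_self, hnb]
        exact hbc

lemma transGen_of_chain {α : Type*} {E : α → α → Prop} {n : ℕ} {v : ℕ → α}
    (hedge : ∀ i < n, E (v i) (v (i+1))) :
    ∀ j, 0 < j → j ≤ n → Relation.TransGen E (v 0) (v j) := by
  intro j
  induction j with
  | zero => omega
  | succ j ih =>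
    intro _ hj
    rcases Nat.eq_zero_or_pos j with h0 | hpos
    · subst h0; exact Relation.TransGen.single (hedge 0 (by omega))
    · exact (ih hpos (by omega)).tail (hedge j (by omega))

lemma dconn_fwd {α : Type*} {E : α → α → Prop} {A : Set α} {x y : α}
    (hA : ∀ a ∈ A, ¬ Ancestor E x a) (h : Ancestor E x y) : DConnected E A x y := by
  obtain ⟨n, v, hn, h0, hny, hedge⟩ := chain_of_transGen h
  refine ⟨n, v, fun _ => true, h0, hny, ?_, ?_⟩
  · intro i hi; simpa using hedge i hi
  · intro j hj1 hj2
    constructor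
    · rintro ⟨_, hc⟩; simp at hc
    · intro _ hvj
      exact hA (v j) hvj (h0 ▸ transGen_of_chain hedge j hj1 (by omega))

lemma dconn_bwd {α : Type*} {E : α → α → Prop} {A : Set α} {x y : α}
    (hA : ∀ a ∈ A, ¬ Ancestor E y a) (h : Ancestor E y x) : DConnected E A x y := by
  obtain ⟨n, u, hn, h0, hnx, hedge⟩ := chain_of_transGen h
  refine ⟨n, fun i => u (n - i), fun _ => false, by simp [hnx], by simp [h0], ?_, ?_⟩
  · intro i hi
    simp only [Bool.false_eq_true, if_false]
    have : n - (i + 1) + 1 = n - i := by omega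
    rw [← this]
    exact hedge (n - (i+1)) (by omega)
  · intro j hj1 hj2
    constructor
    · rintro ⟨hc, _⟩; simp at hc
    · intro _ hvj
      exact hA (u (n - j)) hvj (h0 ▸ transGen_of_chain hedge (n - j) (by omega) (by omega))

/-- Theorem 1, probabilistic form of rule (R3): under Markov and faithfulness, if the
conditional independence `{X} ⫫ {Y} | A` holds for a set `A ⊆ O` of non-descendants of
`{X, Y}`, then neither of `X`, `Y` is an ancestor of the other. -/
theorem rule_R3_probabilistic {Ω ι : Type*} [MeasurableSpace Ω] [StandardBorelSpace Ω]
    [Fintype ι] (μ : Measure Ω) [IsProbabilityMeasure μ]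
    (ξ : ι → Ω → ℝ) (hξ : ∀ v, Measurable (ξ v))
    (E : ι → ι → Prop) (hG : Acyclic E) (O : Set ι)
    (hMF : MarkovFaithful μ ξ hξ E O)
    (X Y : ι) (hXO : X ∈ O) (hYO : Y ∈ O) (hXY : X ≠ Y)
    (A : Set ι) (hAO : A ⊆ O) (hA : NonDescSet E X Y A)
    (hind : CondIndepOf μ ξ hξ {X} {Y} A) :
    ¬ Ancestor E X Y ∧ ¬ Ancestor E Y X := by

  have hdis1 : Disjoint ({X} : Set ι) {Y} := by simp [hXY]
  have hdis2 : Disjoint ({X} : Set ι) A := by simp [hA.1]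
  have hdis3 : Disjoint ({Y} : Set ι) A := by simp [hA.2.1]
  have hsep := (hMF {X} {Y} A (by simpa using hXO) (by simpa using hYO) hAO
    hdis1 hdis2 hdis3 ⟨X, rfl⟩ ⟨Y, rfl⟩).mp hind X rfl Y rfl
  constructor
  · intro h
    exact hsep (dconn_fwd (fun a ha => (hA.2.2 a ha).1) h)
  · intro h
    exact hsep (dconn_bwd (fun a ha => (hA.2.2 a ha).2) h)
end

section
/- Theorem 4 (error control for complementary pairs stability selection). Let (Ω, 𝓕, μ) be a probability space, B a positive integer, L a finite index set, and for each k ∈ L and b ∈ {1, …, 2B} let E_{k,b} ∈ 𝓕 be an event (the selection of feature k on subsample b). Define the selection rate r̂_k := (1/(2B)) Σ_{b=1}^{2B} 1[E_{k,b}] and the simultaneous selection rate s_k := (1/B) Σ_{b=1}^{B} 1[E_{k,2b−1} ∩ E_{k,2b}]. Let 0 ≤ θ < τ ≤ 1 and suppose that for every k ∈ L: the law of r̂_k, a probability mass function supported on {0, 1/(2B), 2/(2B), …, 1}, is −1/4-concave with E[r̂_k] ≤ θ; and the law of s_k, a probability mass function supported on {0, 1/B, 2/B, …, 1}, is −1/2-concave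 with E[s_k] ≤ θ². Then E[ |{k ∈ L : r̂_k ≥ τ}| ] ≤ D(θ, τ, 2B, −1/4) · |L|; and if moreover θ² < 2τ − 1, then also E[ |{k ∈ L : r̂_k ≥ τ}| ] ≤ D(θ², 2τ − 1, B, −1/2) · |L|, so that the expected number of selected low-rate features is at most min{ D(θ², 2τ − 1, B, −1/2), D(θ, τ, 2B, −1/4) } · |L|. -/
open MeasureTheory

/-- The `r`-th generalized mean `M_r(a, b; λ)` of `a, b ≥ 0` (for `r < 0`), with the
convention that it is `0` when `a b = 0`. -/
noncomputable def genMean (r a b lam : ℝ) : ℝ :=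
  if a = 0 ∨ b = 0 then 0 else ((1 - lam) * a ^ r + lam * b ^ r) ^ (1 / r)

/-- A nonnegative function `f` on an interval `I ⊆ ℝ` is `r`-concave if
`f((1−λ)x + λy) ≥ M_r(f(x), f(y); λ)` for all `x, y ∈ I` and `λ ∈ (0, 1)`. -/
def RConcaveOn (r : ℝ) (I : Set ℝ) (f : ℝ → ℝ) : Prop :=
  ∀ x ∈ I, ∀ y ∈ I, ∀ lam ∈ Set.Ioo (0 : ℝ) 1,
    genMean r (f x) (f y) lam ≤ f ((1 - lam) * x + lam * y)

/-- The piecewise-linear interpolant of the points `(i/N, f i)`, `i = 0, …, N`,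
evaluated at `x ∈ [0, 1]`. -/
noncomputable def interp (N : ℕ) (f : ℕ → ℝ) (x : ℝ) : ℝ :=
  f ⌊x * N⌋₊ + (x * N - ⌊x * N⌋₊) * (f (⌊x * N⌋₊ + 1) - f ⌊x * N⌋₊)

/-- `f` is an `r`-concave probability mass function supported on the grid
`{0, 1/N, 2/N, …, 1}` (identifying `f i` with the mass at `i/N`): it is nonnegative,
vanishes beyond the grid, sums to one, and its piecewise-linear interpolant is
`r`-concave on `[0, 1]`. -/
def IsRConcavePMF (N : ℕ) (r : ℝ) (f : ℕ → ℝ) : Prop :=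
  (∀ i, 0 ≤ f i) ∧ (∀ i, N < i → f i = 0) ∧
  (∑ i ∈ Finset.range (N + 1), f i = 1) ∧
  RConcaveOn r (Set.Icc 0 1) (interp N f)

/-- `Dmax θ τ N r` : the supremum of `P(X ≥ τ)` over all random variables `X` supported
on `{0, 1/N, …, 1}` whose probability mass function is `r`-concave and whose mean is at
most `θ`. -/
noncomputable def Dmax (θ τ : ℝ) (N : ℕ) (r : ℝ) : ℝ :=
  sSup {p : ℝ | ∃ f : ℕ → ℝ, IsRConcavePMF N r f ∧
    (∑ i ∈ Finset.range (N + 1), ((i : ℝ) / N) * f i) ≤ θ ∧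
    p = ∑ i ∈ Finset.range (N + 1), if τ ≤ (i : ℝ) / N then f i else 0}


/-!
Pair the `2B` subsamples into complementary halves. For indicators `a, b ∈ {0, 1}` one has
`a + b - 1 ≤ a b`, so summing over the pairs gives `2 r̂_k - 1 ≤ s_k` pointwise; hence
`{r̂_k ≥ τ} ⊆ {s_k ≥ 2τ - 1}`. Each tail probability of a grid-valued rate is a tail mass of
its law, which is one of the competitors in the supremum defining `D`; summing over `k ∈ L`
gives both bounds.
-/

open Finset

noncomputable def selectionRate {Ω : Type*} (A : ℕ → Set Ω) (n : ℕ) (ω : Ω) : ℝ :=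
  (∑ b ∈ Icc 1 n, (A b).indicator (fun _ => (1 : ℝ)) ω) / n

section SelectionRate

variable {Ω : Type*}

lemma sum_Icc_two_mul_eq_sum_pairs (h : ℕ → ℝ) (B : ℕ) :
    ∑ b ∈ Icc 1 (2 * B), h b = ∑ b ∈ Icc 1 B, (h (2 * b - 1) + h (2 * b)) := by
  induction B with
  | zero => simp
  | succ B ih =>
    rw [sum_Icc_succ_top (by omega), ← ih, show 2 * (B + 1) = 2 * B + 1 + 1 by omega,
      sum_Icc_succ_top (by omega), sum_Icc_succ_top (by omega), Nat.add_sub_cancel, add_assoc]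

lemma indicator_add_indicator_sub_one_le_indicator_inter (A C : Set Ω) (ω : Ω) :
    A.indicator (fun _ => (1 : ℝ)) ω + C.indicator (fun _ => (1 : ℝ)) ω - 1
      ≤ (A ∩ C).indicator (fun _ => (1 : ℝ)) ω := by
  by_cases hA : ω ∈ A <;> by_cases hC : ω ∈ C <;> simp [hA, hC]

lemma two_mul_selectionRate_sub_one_le (A : ℕ → Set Ω) (B : ℕ) (ω : Ω) :
    2 * selectionRate A (2 * B) ω - 1
      ≤ selectionRate (fun b => A (2 * b - 1) ∩ A (2 * b)) B ω := by
  rcases B.eq_zero_or_pos with rfl | hB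
  · simp [selectionRate]
  have hpairs : ∑ b ∈ Icc 1 (2 * B), (A b).indicator (fun _ => (1 : ℝ)) ω - B
      ≤ ∑ b ∈ Icc 1 B, (A (2 * b - 1) ∩ A (2 * b)).indicator (fun _ => (1 : ℝ)) ω := by
    rw [sum_Icc_two_mul_eq_sum_pairs]
    calc _ = ∑ b ∈ Icc 1 B, ((A (2 * b - 1)).indicator (fun _ => (1 : ℝ)) ω
              + (A (2 * b)).indicator (fun _ => (1 : ℝ)) ω - 1) := by
          simp [sum_sub_distrib]
      _ ≤ _ := sum_le_sum fun b _ => indicator_add_indicator_sub_one_le_indicator_inter _ _ ω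
  have hB' : (0 : ℝ) < B := by exact_mod_cast hB
  simp only [selectionRate, Nat.cast_mul, Nat.cast_ofNat]
  rw [le_div_iff₀ hB']
  field_simp
  linarith

lemma selectionRate_mem_grid (A : ℕ → Set Ω) (n : ℕ) (ω : Ω) :
    ∃ m ≤ n, selectionRate A n ω = m / n := by
  classical
  refine ⟨#{b ∈ Icc 1 n | ω ∈ A b}, (card_filter_le _ _).trans (by simp), ?_⟩
  simp [selectionRate, Set.indicator_apply, sum_boole]

lemma measurable_selectionRate [MeasurableSpace Ω] {A : ℕ → Set Ω}
    (hA : ∀ b, MeasurableSet (A b)) (n : ℕ) : Measurable (selectionRate A n) :=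
  (Finset.measurable_sum _ fun b _ => measurable_const.indicator (hA b)).div_const _

end SelectionRate

lemma injOn_natCast_div (N : ℕ) : Set.InjOn (fun i : ℕ => (i : ℝ) / N) (range (N + 1)) := by
  rcases N.eq_zero_or_pos with rfl | hN
  · intro i hi j hj _
    simp_all
  · intro i _ j _ hij
    have hN' : (N : ℝ) ≠ 0 := by positivity
    exact_mod_cast (div_left_inj' hN').mp hij

lemma le_Dmax {θ τ r : ℝ} {N : ℕ} {f : ℕ → ℝ} (hf : IsRConcavePMF N r f)
    (hmean : ∑ i ∈ range (N + 1), ((i : ℝ) / N) * f i ≤ θ) :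
    (∑ i ∈ range (N + 1), if τ ≤ (i : ℝ) / N then f i else 0) ≤ Dmax θ τ N r := by
  refine le_csSup ⟨1, ?_⟩ ⟨f, hf, hmean, rfl⟩
  rintro p ⟨g, hg, -, rfl⟩
  calc _ ≤ ∑ i ∈ range (N + 1), g i := sum_le_sum fun i _ => by split_ifs <;> simp [hg.1 i]
    _ = 1 := hg.2.2.1

section GridValued

variable {Ω : Type*} [MeasurableSpace Ω] (μ : Measure Ω) [IsFiniteMeasure μ]

lemma measureReal_tail_eq_sum_grid {X : Ω → ℝ} (hX : Measurable X) {N : ℕ}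
    (hgrid : ∀ ω, ∃ m ≤ N, X ω = m / N) (τ : ℝ) :
    μ.real {ω | τ ≤ X ω} =
      ∑ i ∈ range (N + 1), if τ ≤ (i : ℝ) / N then μ.real {ω | X ω = i / N} else 0 := by
  classical
  set S := (range (N + 1)).filter fun i : ℕ => τ ≤ (i : ℝ) / N
  have hunion : {ω | τ ≤ X ω} = ⋃ i ∈ S, {ω | X ω = i / N} := by
    ext ω
    simp only [Set.mem_iUnion, S, mem_filter, mem_range, exists_prop, Set.mem_ofPred_eq]
    constructor
    · intro hτ
      obtain ⟨m, hm, hXm⟩ := hgrid ω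
      exact ⟨m, ⟨by omega, hXm ▸ hτ⟩, hXm⟩
    · rintro ⟨i, ⟨-, hτi⟩, hXi⟩
      exact hXi ▸ hτi
  have hdisj : Set.PairwiseDisjoint (S : Set ℕ) fun i : ℕ => {ω | X ω = i / N} :=
    fun i hi j hj hij => Set.disjoint_left.mpr fun ω hωi hωj => hij <|
      injOn_natCast_div N (filter_subset _ _ hi) (filter_subset _ _ hj) (hωi.symm.trans hωj)
  rw [hunion, measureReal_biUnion_finset hdisj fun i _ => hX (measurableSet_singleton _),
    sum_filter]

lemma measureReal_tail_le_Dmax {X : Ω → ℝ} (hX : Measurable X) {N : ℕ}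
    (hgrid : ∀ ω, ∃ m ≤ N, X ω = m / N) {θ τ r : ℝ} {f : ℕ → ℝ}
    (hlaw : ∀ i ≤ N, f i = μ.real {ω | X ω = i / N}) (hf : IsRConcavePMF N r f)
    (hmean : ∑ i ∈ range (N + 1), ((i : ℝ) / N) * f i ≤ θ) :
    μ.real {ω | τ ≤ X ω} ≤ Dmax θ τ N r := by
  rw [measureReal_tail_eq_sum_grid μ hX hgrid]
  refine le_of_eq_of_le (sum_congr rfl fun i hi => ?_) (le_Dmax hf hmean)
  rw [hlaw i (Nat.lt_succ_iff.mp (mem_range.mp hi))]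

lemma integral_sum_ite_le_mul_card {ι : Type*} {L : Finset ι} {X : ι → Ω → ℝ}
    (hX : ∀ k ∈ L, Measurable (X k)) {τ D : ℝ} (hD : ∀ k ∈ L, μ.real {ω | τ ≤ X k ω} ≤ D) :
    ∫ ω, (∑ k ∈ L, if τ ≤ X k ω then (1 : ℝ) else 0) ∂μ ≤ D * #L := by
  have hind : ∀ k, (fun ω => if τ ≤ X k ω then (1 : ℝ) else 0)
      = {ω | τ ≤ X k ω}.indicator 1 := fun k => by
    ext ω
    simp [Set.indicator_apply]
  have hmeas : ∀ k ∈ L, MeasurableSet {ω | τ ≤ X k ω} := fun k hk => hX k hk measurableSet_Ici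
  rw [integral_finsetSum L fun k hk => by
    rw [hind]; exact (integrable_const _).indicator (hmeas k hk)]
  calc _ = ∑ k ∈ L, μ.real {ω | τ ≤ X k ω} := sum_congr rfl fun k hk => by
        rw [hind, integral_indicator_one (hmeas k hk)]
    _ ≤ ∑ _k ∈ L, D := sum_le_sum hD
    _ = D * #L := by rw [sum_const, nsmul_eq_mul, mul_comm]

end GridValued

theorem stability_selection_error_control_general {Ω ι : Type*} [MeasurableSpace Ω]
    (μ : Measure Ω) [IsProbabilityMeasure μ] (B : ℕ)
    (L : Finset ι) (E : ι → ℕ → Set Ω) (hE : ∀ k b, MeasurableSet (E k b))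
    (r s : ι → Ω → ℝ)
    (hr : r = fun k ω =>
      (∑ b ∈ Finset.Icc 1 (2 * B), (E k b).indicator (fun _ => (1 : ℝ)) ω) / (2 * B))
    (hs : s = fun k ω =>
      (∑ b ∈ Finset.Icc 1 B,
        (E k (2 * b - 1) ∩ E k (2 * b)).indicator (fun _ => (1 : ℝ)) ω) / B)
    (θ τ : ℝ)
    (hlawr : ∀ k ∈ L, ∃ f : ℕ → ℝ,
      (∀ i ≤ 2 * B, f i = (μ {ω | r k ω = (i : ℝ) / (2 * B)}).toReal) ∧
      IsRConcavePMF (2 * B) (-(1 / 4)) f ∧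
      (∑ i ∈ Finset.range (2 * B + 1), ((i : ℝ) / (2 * B)) * f i) ≤ θ)
    (hlaws : ∀ k ∈ L, ∃ g : ℕ → ℝ,
      (∀ i ≤ B, g i = (μ {ω | s k ω = (i : ℝ) / B}).toReal) ∧
      IsRConcavePMF B (-(1 / 2)) g ∧
      (∑ i ∈ Finset.range (B + 1), ((i : ℝ) / B) * g i) ≤ θ ^ 2) :
    (∫ ω, (∑ k ∈ L, if τ ≤ r k ω then (1 : ℝ) else 0) ∂μ ≤
      Dmax θ τ (2 * B) (-(1 / 4)) * L.card) ∧
    (θ ^ 2 < 2 * τ - 1 →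
      (∫ ω, (∑ k ∈ L, if τ ≤ r k ω then (1 : ℝ) else 0) ∂μ ≤
        Dmax (θ ^ 2) (2 * τ - 1) B (-(1 / 2)) * L.card) ∧
      (∫ ω, (∑ k ∈ L, if τ ≤ r k ω then (1 : ℝ) else 0) ∂μ ≤
        min (Dmax (θ ^ 2) (2 * τ - 1) B (-(1 / 2)))
          (Dmax θ τ (2 * B) (-(1 / 4))) * L.card)) := by
  obtain rfl : r = fun k => selectionRate (E k) (2 * B) := by
    rw [hr]; ext k ω; simp [selectionRate]
  obtain rfl : s = fun k => selectionRate (fun b => E k (2 * b - 1) ∩ E k (2 * b)) B := hs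
  have hrate : ∀ k ∈ L, μ.real {ω | τ ≤ selectionRate (E k) (2 * B) ω}
      ≤ Dmax θ τ (2 * B) (-(1 / 4)) := fun k hk => by
    obtain ⟨f, hlaw, hf, hmean⟩ := hlawr k hk
    exact measureReal_tail_le_Dmax μ (measurable_selectionRate (hE k) _)
      (selectionRate_mem_grid _ _) (by exact_mod_cast hlaw) hf (by exact_mod_cast hmean)
  have hpair : ∀ k ∈ L, μ.real {ω | τ ≤ selectionRate (E k) (2 * B) ω}
      ≤ Dmax (θ ^ 2) (2 * τ - 1) B (-(1 / 2)) := fun k hk => by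
    obtain ⟨g, hlaw, hg, hmean⟩ := hlaws k hk
    refine (measureReal_mono fun ω (hω : τ ≤ _) => ?_).trans <| measureReal_tail_le_Dmax μ
      (measurable_selectionRate (fun b => (hE k _).inter (hE k _)) _)
      (selectionRate_mem_grid _ _) hlaw hg hmean
    show 2 * τ - 1 ≤ _
    linarith [two_mul_selectionRate_sub_one_le (E k) B ω]
  have hmeas : ∀ k ∈ L, Measurable (selectionRate (E k) (2 * B)) :=
    fun k _ => measurable_selectionRate (hE k) _
  refine ⟨integral_sum_ite_le_mul_card μ hmeas hrate,
    fun _ => ⟨integral_sum_ite_le_mul_card μ hmeas hpair, ?_⟩⟩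
  rw [min_mul_of_nonneg _ _ (Nat.cast_nonneg _)]
  exact le_min (integral_sum_ite_le_mul_card μ hmeas hpair)
    (integral_sum_ite_le_mul_card μ hmeas hrate)

/-- Theorem 4 (error control for complementary pairs stability selection).  For each
low-rate feature `k ∈ L`, let `r̂ k` be its selection rate over `2B` subsamples and
`s k` its simultaneous selection rate over the `B` complementary pairs.  If each `r̂ k`
has a `−1/4`-concave law on the grid `{0, 1/(2B), …, 1}` with mean at most `θ`, and
each `s k` has a `−1/2`-concave law on `{0, 1/B, …, 1}` with mean at most `θ²`, then
the expected number of features `k ∈ L` with `r̂ k ≥ τ` is at most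
`D(θ, τ, 2B, −1/4)·|L|`; if moreover `θ² < 2τ − 1`, it is also at most
`D(θ², 2τ−1, B, −1/2)·|L|`, hence at most the minimum of the two bounds. -/
theorem stability_selection_error_control {Ω ι : Type*} [MeasurableSpace Ω]
    (μ : Measure Ω) [IsProbabilityMeasure μ] (B : ℕ) (hB : 0 < B)
    (L : Finset ι) (E : ι → ℕ → Set Ω) (hE : ∀ k b, MeasurableSet (E k b))
    (r s : ι → Ω → ℝ)
    (hr : r = fun k ω =>
      (∑ b ∈ Finset.Icc 1 (2 * B), (E k b).indicator (fun _ => (1 : ℝ)) ω) / (2 * B))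
    (hs : s = fun k ω =>
      (∑ b ∈ Finset.Icc 1 B,
        (E k (2 * b - 1) ∩ E k (2 * b)).indicator (fun _ => (1 : ℝ)) ω) / B)
    (θ τ : ℝ) (hθ0 : 0 ≤ θ) (hθτ : θ < τ) (hτ1 : τ ≤ 1)
    (hlawr : ∀ k ∈ L, ∃ f : ℕ → ℝ,
      (∀ i ≤ 2 * B, f i = (μ {ω | r k ω = (i : ℝ) / (2 * B)}).toReal) ∧
      IsRConcavePMF (2 * B) (-(1 / 4)) f ∧
      (∑ i ∈ Finset.range (2 * B + 1), ((i : ℝ) / (2 * B)) * f i) ≤ θ)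
    (hlaws : ∀ k ∈ L, ∃ g : ℕ → ℝ,
      (∀ i ≤ B, g i = (μ {ω | s k ω = (i : ℝ) / B}).toReal) ∧
      IsRConcavePMF B (-(1 / 2)) g ∧
      (∑ i ∈ Finset.range (B + 1), ((i : ℝ) / B) * g i) ≤ θ ^ 2) :
    (∫ ω, (∑ k ∈ L, if τ ≤ r k ω then (1 : ℝ) else 0) ∂μ ≤
      Dmax θ τ (2 * B) (-(1 / 4)) * L.card) ∧
    (θ ^ 2 < 2 * τ - 1 →
      (∫ ω, (∑ k ∈ L, if τ ≤ r k ω then (1 : ℝ) else 0) ∂μ ≤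
        Dmax (θ ^ 2) (2 * τ - 1) B (-(1 / 2)) * L.card) ∧
      (∫ ω, (∑ k ∈ L, if τ ≤ r k ω then (1 : ℝ) else 0) ∂μ ≤
        min (Dmax (θ ^ 2) (2 * τ - 1) B (-(1 / 2)))
          (Dmax θ τ (2 * B) (-(1 / 4))) * L.card)) :=
  stability_selection_error_control_general μ B L E hE r s hr hs θ τ hlawr hlaws
end
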